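/- arXiv:math/0301194 — 10 statements merged into one kernel-verified Lean document; each statement's English description precedes it below -/
import Mathlib

section
/- For every integer n ≥ 1, the 2^n polynomials L_1^{(n)}, …, L_{2^n}^{(n)} are linearly independent over ℚ in the polynomial ring ℚ[U_1,…,U_n]. -/
open scoped BigOperators

/-- The polynomial `L_k^{(n)} = Σ_{0 ≤ j_1 < ⋯ < j_k ≤ 2^n−1} Σ_{h=1}^{k}
(∏_{r ≠ h} j_r) · ∏_{i=1}^{n} U_i^{[j_h]_i}` in `ℚ[U_1,…,U_n]`, where `[j]_i`
is the `i`-th binary digit of `j`. -/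
noncomputable def Lpoly (n k : ℕ) : MvPolynomial (Fin n) ℚ :=
  ∑ s ∈ (Finset.range (2 ^ n)).powersetCard k,
    ∑ h ∈ s,
      MvPolynomial.C (∏ r ∈ s.erase h, (r : ℚ)) *
        ∏ i : Fin n, MvPolynomial.X i ^ (Nat.testBit h i.val).toNat

namespace LpolyAux

open Finset MvPolynomial

/-- Elementary symmetric function `e_k` of `{0, …, 2^n − 1} \ {j}`. -/
noncomputable def E (n j k : ℕ) : ℚ :=
  ∑ t ∈ ((Finset.range (2 ^ n)).erase j).powersetCard k, ∏ r ∈ t, (r : ℚ)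

/-- The monomial whose exponents are the binary digits of `j`. -/
noncomputable def mon (n j : ℕ) : MvPolynomial (Fin n) ℚ :=
  ∏ i : Fin n, MvPolynomial.X i ^ (Nat.testBit j i.val).toNat

lemma inner_sum (n k h : ℕ) (hh0 : h ∈ Finset.range (2 ^ n)) :
    ∑ s ∈ ((Finset.range (2 ^ n)).powersetCard (k + 1)).filter (fun s => h ∈ s),
      (∏ r ∈ s.erase h, (r : ℚ)) = E n h k := by
  rw [E]
  refine Finset.sum_nbij' (fun s => s.erase h) (fun t => insert h t) ?_ ?_ ?_ ?_ ?_
  · intro s hs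
    simp only [Finset.mem_filter, Finset.mem_powersetCard] at hs
    obtain ⟨⟨hsub, hcard⟩, hmem⟩ := hs
    rw [Finset.mem_powersetCard]
    constructor
    · exact Finset.erase_subset_erase h hsub
    · rw [Finset.card_erase_of_mem hmem, hcard]; rfl
  · intro t ht
    rw [Finset.mem_powersetCard] at ht
    obtain ⟨hsub, hcard⟩ := ht
    have hh : h ∉ t := fun hc => (Finset.notMem_erase h _) (hsub hc)
    simp only [Finset.mem_filter, Finset.mem_powersetCard]
    refine ⟨⟨?_, ?_⟩, Finset.mem_insert_self h t⟩
    · exact Finset.insert_subset hh0 (hsub.trans (Finset.erase_subset h _))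
    · rw [Finset.card_insert_of_notMem hh, hcard]
  · intro s hs
    simp only [Finset.mem_filter] at hs
    exact Finset.insert_erase hs.2
  · intro t ht
    rw [Finset.mem_powersetCard] at ht
    have hh : h ∉ t := fun hc => (Finset.notMem_erase h _) (ht.1 hc)
    exact Finset.erase_insert hh
  · intro s _
    rfl

lemma Lpoly_eq (n k : ℕ) :
    Lpoly n (k + 1) = ∑ j ∈ Finset.range (2 ^ n), MvPolynomial.C (E n j k) * mon n j := by
  simp only [Lpoly, mon]
  have step1 : ∀ s ∈ (Finset.range (2 ^ n)).powersetCard (k + 1),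
      (∑ h ∈ s, MvPolynomial.C (∏ r ∈ s.erase h, (r : ℚ)) *
          ∏ i : Fin n, MvPolynomial.X i ^ (Nat.testBit h i.val).toNat)
      = ∑ h ∈ Finset.range (2 ^ n), if h ∈ s then
          MvPolynomial.C (∏ r ∈ s.erase h, (r : ℚ)) *
          ∏ i : Fin n, MvPolynomial.X i ^ (Nat.testBit h i.val).toNat else 0 := by
    intro s hs
    rw [Finset.sum_ite_mem,
      Finset.inter_eq_right.mpr (Finset.mem_powersetCard.mp hs).1]
  rw [Finset.sum_congr rfl step1, Finset.sum_comm]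
  refine Finset.sum_congr rfl fun h hh => ?_
  rw [← Finset.sum_filter, ← inner_sum n k h hh, map_sum, Finset.sum_mul]

/-- The exponent vector of `mon n j`. -/
noncomputable def dofj (n j : ℕ) : Fin n →₀ ℕ :=
  Finsupp.equivFunOnFinite.symm (fun i => (Nat.testBit j i.val).toNat)

lemma mon_eq_monomial (n j : ℕ) : mon n j = MvPolynomial.monomial (dofj n j) 1 := by
  rw [MvPolynomial.monomial_eq, map_one, one_mul,
    Finsupp.prod_fintype _ _ (fun i => pow_zero _)]
  rfl

lemma dofj_inj (n : ℕ) {j j' : ℕ} (hj : j < 2 ^ n) (hj' : j' < 2 ^ n)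
    (h : dofj n j = dofj n j') : j = j' := by
  apply Nat.eq_of_testBit_eq
  intro i
  by_cases hi : i < n
  · have h2 : (Nat.testBit j i).toNat = (Nat.testBit j' i).toNat := by
      have := DFunLike.congr_fun h ⟨i, hi⟩
      simpa [dofj] using this
    cases hb : Nat.testBit j i <;> cases hb' : Nat.testBit j' i <;> simp_all
  · have h1 : Nat.testBit j i = false :=
      Nat.testBit_eq_false_of_lt
        (lt_of_lt_of_le hj (Nat.pow_le_pow_right (by norm_num) (le_of_not_gt hi)))
    have h2 : Nat.testBit j' i = false :=
      Nat.testBit_eq_false_of_lt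
        (lt_of_lt_of_le hj' (Nat.pow_le_pow_right (by norm_num) (le_of_not_gt hi)))
    rw [h1, h2]

lemma coeff_mon (n j j' : ℕ) (hj : j < 2 ^ n) (hj' : j' < 2 ^ n) :
    MvPolynomial.coeff (dofj n j) (mon n j') = if j' = j then 1 else 0 := by
  rw [mon_eq_monomial, MvPolynomial.coeff_monomial]
  by_cases h : j' = j
  · simp [h]
  · rw [if_neg (fun hc => h (dofj_inj n hj' hj hc)), if_neg h]

lemma coeff_Lpoly (n k j : ℕ) (hj : j ∈ Finset.range (2 ^ n)) :
    MvPolynomial.coeff (dofj n j) (Lpoly n (k + 1)) = E n j k := by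
  rw [Lpoly_eq, MvPolynomial.coeff_sum]
  have key : ∀ j' ∈ Finset.range (2 ^ n),
      MvPolynomial.coeff (dofj n j) (MvPolynomial.C (E n j' k) * mon n j')
        = if j' = j then E n j k else 0 := by
    intro j' hj'
    rw [MvPolynomial.coeff_C_mul,
      coeff_mon n j j' (Finset.mem_range.mp hj) (Finset.mem_range.mp hj')]
    by_cases h : j' = j <;> simp [h]
  rw [Finset.sum_congr rfl key, Finset.sum_ite_eq' _ j (fun _ => E n j k), if_pos hj]

lemma prod_expand (T : Finset ℕ) (x : ℚ) :
    ∏ r ∈ T, ((r : ℚ) + x)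
      = ∑ k ∈ Finset.range (T.card + 1),
          (∑ t ∈ T.powersetCard k, ∏ r ∈ t, (r : ℚ)) * x ^ (T.card - k) := by
  rw [Finset.prod_add, Finset.sum_powerset]
  refine Finset.sum_congr rfl fun k _ => ?_
  rw [Finset.sum_mul]
  refine Finset.sum_congr rfl fun t ht => ?_
  rw [Finset.mem_powersetCard] at ht
  rw [Finset.prod_const, Finset.card_sdiff_of_subset ht.1, ht.2]

lemma diag_entry (n j : ℕ) (hj : j ∈ Finset.range (2 ^ n)) (m : ℕ) :
    ∑ k ∈ Finset.range (2 ^ n), E n j k * (-(m : ℚ)) ^ (2 ^ n - 1 - k)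
      = ∏ r ∈ (Finset.range (2 ^ n)).erase j, ((r : ℚ) - m) := by
  have hcard : ((Finset.range (2 ^ n)).erase j).card = 2 ^ n - 1 := by
    rw [Finset.card_erase_of_mem hj, Finset.card_range]
  have h1 : (1 : ℕ) ≤ 2 ^ n := Nat.one_le_two_pow
  have hex := prod_expand ((Finset.range (2 ^ n)).erase j) (-(m : ℚ))
  rw [hcard, Nat.sub_add_cancel h1] at hex
  simp only [E]
  rw [← hex]
  exact Finset.prod_congr rfl fun r _ => by ring

lemma diag_ne (n j : ℕ) :
    ∏ r ∈ (Finset.range (2 ^ n)).erase j, ((r : ℚ) - j) ≠ 0 := by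
  rw [Finset.prod_ne_zero_iff]
  intro r hr hc
  exact Finset.ne_of_mem_erase hr (by exact_mod_cast sub_eq_zero.mp hc)

lemma offdiag (n j m : ℕ) (hm : m ∈ Finset.range (2 ^ n)) (hne : m ≠ j) :
    ∏ r ∈ (Finset.range (2 ^ n)).erase j, ((r : ℚ) - m) = 0 :=
  Finset.prod_eq_zero (Finset.mem_erase.mpr ⟨hne, hm⟩) (by simp)

end LpolyAux

/-- For every `n ≥ 1`, the `2^n` polynomials `L_1^{(n)}, …, L_{2^n}^{(n)}` are
linearly independent over `ℚ` in `ℚ[U_1,…,U_n]`. -/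
theorem Lpoly_linearIndependent (n : ℕ) (hn : 1 ≤ n) :
    LinearIndependent ℚ (fun k : Fin (2 ^ n) => Lpoly n (k.val + 1)) := by
  classical
  rw [Fintype.linearIndependent_iff]
  intro g hg
  set M : Matrix (Fin (2 ^ n)) (Fin (2 ^ n)) ℚ :=
    fun j k => LpolyAux.E n j.val k.val with hMdef
  have hrel : M.mulVec g = 0 := by
    funext j
    have hj : (j : ℕ) ∈ Finset.range (2 ^ n) := Finset.mem_range.mpr j.isLt
    have hc := congrArg (MvPolynomial.coeff (LpolyAux.dofj n j.val)) hg
    rw [MvPolynomial.coeff_sum] at hc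
    simp only [MvPolynomial.coeff_smul, MvPolynomial.coeff_zero] at hc
    have hc2 : ∑ k : Fin (2 ^ n), g k * LpolyAux.E n j.val k.val = 0 := by
      rw [← hc]
      refine Finset.sum_congr rfl fun k _ => ?_
      rw [LpolyAux.coeff_Lpoly n k.val j.val hj]
      rfl
    simp only [Matrix.mulVec, dotProduct, hMdef, Pi.zero_apply]
    rw [← hc2]
    exact Finset.sum_congr rfl fun k _ => mul_comm _ _
  set W : Matrix (Fin (2 ^ n)) (Fin (2 ^ n)) ℚ :=
    fun k m => (-(m.val : ℚ)) ^ (2 ^ n - 1 - k.val) with hWdef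
  have hMW : M * W = Matrix.diagonal
      (fun j : Fin (2 ^ n) =>
        ∏ r ∈ (Finset.range (2 ^ n)).erase j.val, ((r : ℚ) - j.val)) := by
    ext j m
    rw [Matrix.mul_apply]
    have hj : (j : ℕ) ∈ Finset.range (2 ^ n) := Finset.mem_range.mpr j.isLt
    have hm : (m : ℕ) ∈ Finset.range (2 ^ n) := Finset.mem_range.mpr m.isLt
    have hsum : ∑ k : Fin (2 ^ n), M j k * W k m
        = ∑ k ∈ Finset.range (2 ^ n),
            LpolyAux.E n j.val k * (-(m.val : ℚ)) ^ (2 ^ n - 1 - k) :=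
      (Finset.sum_range fun k =>
        LpolyAux.E n j.val k * (-(m.val : ℚ)) ^ (2 ^ n - 1 - k)).symm
    rw [hsum, LpolyAux.diag_entry n j.val hj m.val]
    by_cases h : j = m
    · subst h
      rw [Matrix.diagonal_apply_eq]
    · rw [Matrix.diagonal_apply_ne _ h]
      exact LpolyAux.offdiag n j.val m.val hm
        (fun hc => h (Fin.ext hc.symm))
  have hdetMW : (M * W).det ≠ 0 := by
    rw [hMW, Matrix.det_diagonal]
    exact Finset.prod_ne_zero_iff.mpr fun j _ => LpolyAux.diag_ne n j.val
  have hdetM : M.det ≠ 0 := by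
    intro h
    rw [Matrix.det_mul, h, zero_mul] at hdetMW
    exact hdetMW rfl
  have hg0 : g = 0 := Matrix.eq_zero_of_mulVec_eq_zero hdetM hrel
  intro i
  exact congrFun hg0 i
end

section
/- Let N be a natural number and let k be an integer with 1 ≤ k ≤ N+1. Then there exists a univariate polynomial p with integer coefficients, of degree exactly k−1, such that for every integer j with 0 ≤ j ≤ N one has p(j) = Σ j_1⋯j_{k−1}, where the sum ranges over all tuples of integers 0 ≤ j_1 < ⋯ < j_{k−1} ≤ N with j_r ≠ j for r = 1,…,k−1 (for k = 1 the sum consists of the single empty product and equals 1). -/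
open scoped BigOperators

private def Efull (N t : ℕ) : ℤ :=
  ∑ s ∈ (Finset.range (N + 1)).powersetCard t, ∏ r ∈ s, (r : ℤ)

private def Aav (N t j : ℕ) : ℤ :=
  ∑ s ∈ ((Finset.range (N + 1)).powersetCard t).filter (fun s => j ∉ s),
    ∏ r ∈ s, (r : ℤ)

private lemma rec_aux (N t j : ℕ) (hj : j ≤ N) :
    Efull N (t + 1) = Aav N (t + 1) j + (j : ℤ) * Aav N t j := by
  unfold Efull Aav
  rw [← Finset.sum_filter_add_sum_filter_not ((Finset.range (N + 1)).powersetCard (t + 1))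
    (fun s => j ∉ s)]
  congr 1
  rw [Finset.mul_sum]
  refine (Finset.sum_nbij' (fun s => insert j s) (fun s => s.erase j) ?_ ?_ ?_ ?_ ?_).symm
  · intro s hs
    simp only [Finset.mem_filter, Finset.mem_powersetCard, not_not] at hs ⊢
    obtain ⟨⟨hsub, hcard⟩, hjs⟩ := hs
    refine ⟨⟨Finset.insert_subset (Finset.mem_range.mpr (Nat.lt_succ_of_le hj)) hsub, ?_⟩,
      Finset.mem_insert_self _ _⟩
    rw [Finset.card_insert_of_notMem hjs, hcard]
  · intro s hs
    simp only [Finset.mem_filter, Finset.mem_powersetCard, not_not] at hs ⊢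
    obtain ⟨⟨hsub, hcard⟩, hjs⟩ := hs
    refine ⟨⟨(Finset.erase_subset _ _).trans hsub, ?_⟩, Finset.notMem_erase _ _⟩
    rw [Finset.card_erase_of_mem hjs, hcard]
    omega
  · intro s hs
    simp only [Finset.mem_filter] at hs
    exact Finset.erase_insert hs.2
  · intro s hs
    simp only [Finset.mem_filter, not_not] at hs
    exact Finset.insert_erase hs.2
  · intro s hs
    simp only [Finset.mem_filter] at hs
    rw [Finset.prod_insert hs.2]

private lemma aav_eq (N j : ℕ) (hj : j ≤ N) : ∀ t : ℕ,
    Aav N t j = ∑ i ∈ Finset.range (t + 1), (-(j : ℤ)) ^ i * Efull N (t - i) := by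
  intro t
  induction t with
  | zero =>
    simp [Aav, Efull, Finset.filter_singleton]
  | succ t ih =>
    have hrec := rec_aux N t j hj
    have hstep : Aav N (t + 1) j = Efull N (t + 1) - (j : ℤ) * Aav N t j := by linarith
    rw [hstep, ih, Finset.sum_range_succ' (fun i => (-(j : ℤ)) ^ i * Efull N (t + 1 - i)) (t + 1)]
    simp only [pow_zero, one_mul, Nat.sub_zero]
    have h2 : ∀ i ∈ Finset.range (t + 1),
        (-(j : ℤ)) ^ (i + 1) * Efull N (t + 1 - (i + 1))
          = -(j : ℤ) * ((-(j : ℤ)) ^ i * Efull N (t - i)) := by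
      intro i hi
      have hsub : t + 1 - (i + 1) = t - i := by omega
      rw [hsub, pow_succ]
      ring
    rw [Finset.sum_congr rfl h2, ← Finset.mul_sum]
    ring

/-- For `1 ≤ k ≤ N+1` there is an integer polynomial `p` of degree exactly `k−1`
such that for every `0 ≤ j ≤ N`,
`p(j) = Σ_{0 ≤ j_1 < ⋯ < j_{k−1} ≤ N, j_r ≠ j} j_1⋯j_{k−1}`
(for `k = 1` the sum is the single empty product, which equals `1`). -/
theorem exists_integer_polynomial_for_cell_coefficients
    (N k : ℕ) (hk1 : 1 ≤ k) (hk2 : k ≤ N + 1) :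
    ∃ p : Polynomial ℤ, p.degree = (k - 1 : ℕ) ∧
      ∀ j : ℕ, j ≤ N →
        p.eval (j : ℤ) =
          ∑ s ∈ ((Finset.range (N + 1)).powersetCard (k - 1)).filter (fun s => j ∉ s),
            ∏ r ∈ s, (r : ℤ) := by
  set m := k - 1 with hm
  refine ⟨∑ i ∈ Finset.range (m + 1), Polynomial.C ((-1 : ℤ) ^ i * Efull N (m - i))
    * Polynomial.X ^ i, ?_, ?_⟩
  · have hcoeff : (∑ i ∈ Finset.range (m + 1), Polynomial.C ((-1 : ℤ) ^ i * Efull N (m - i))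
        * Polynomial.X ^ i).coeff m = (-1 : ℤ) ^ m := by
      rw [Polynomial.finset_sum_coeff, Finset.sum_eq_single m]
      · rw [Polynomial.coeff_C_mul, Polynomial.coeff_X_pow, if_pos rfl, mul_one,
          Nat.sub_self]
        simp [Efull]
      · intro i hi hne
        rw [Polynomial.coeff_C_mul, Polynomial.coeff_X_pow, if_neg (Ne.symm hne), mul_zero]
      · intro h
        exact absurd (Finset.self_mem_range_succ m) h
    have hle : (∑ i ∈ Finset.range (m + 1), Polynomial.C ((-1 : ℤ) ^ i * Efull N (m - i))
        * Polynomial.X ^ i).degree ≤ (m : WithBot ℕ) := by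
      refine (Polynomial.degree_sum_le _ _).trans ?_
      apply Finset.sup_le
      intro i hi
      refine (Polynomial.degree_mul_le _ _).trans ?_
      refine (add_le_add Polynomial.degree_C_le le_rfl).trans ?_
      rw [zero_add, Polynomial.degree_X_pow]
      exact_mod_cast Nat.lt_succ_iff.mp (Finset.mem_range.mp hi)
    have hne : (∑ i ∈ Finset.range (m + 1), Polynomial.C ((-1 : ℤ) ^ i * Efull N (m - i))
        * Polynomial.X ^ i).coeff m ≠ 0 := by
      rw [hcoeff]
      exact pow_ne_zero _ (by norm_num)
    exact le_antisymm hle (Polynomial.le_degree_of_ne_zero hne)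
  · intro j hj
    have haux := aav_eq N j hj m
    unfold Aav at haux
    rw [haux]
    simp only [Polynomial.eval_finset_sum, Polynomial.eval_mul, Polynomial.eval_C,
      Polynomial.eval_pow, Polynomial.eval_X]
    apply Finset.sum_congr rfl
    intro i hi
    rw [show (-(j : ℤ)) ^ i = (j : ℤ) ^ i * (-1 : ℤ) ^ i by rw [neg_pow]; ring]
    ring
end

section
/- Let n ≥ 1 and let C and D be Zariski closed subsets of ℂ^n. If the Zariski locally closed set S := C ∖ D is bounded with respect to the euclidean norm on ℂ^n (i.e., contained in some ball), then S is finite. -/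
open MvPolynomial Ideal Polynomial Bornology Set


noncomputable section ZarAux

/-- evaluation of a substituted polynomial -/
lemma eval_aeval_comp {m k : ℕ} (u : Fin m → MvPolynomial (Fin k) ℂ)
    (x : Fin k → ℂ) (h : MvPolynomial (Fin m) ℂ) :
    MvPolynomial.eval x (MvPolynomial.aeval u h)
      = MvPolynomial.eval (fun j => MvPolynomial.eval x (u j)) h := by
  have := MvPolynomial.eval₂_comp_left (MvPolynomial.eval x)
    (algebraMap ℂ (MvPolynomial (Fin k) ℂ)) u h
  rw [MvPolynomial.aeval_def, this]
  have he : (MvPolynomial.eval x).comp (algebraMap ℂ (MvPolynomial (Fin k) ℂ)) = RingHom.id ℂ := by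
    ext a; simp
  rw [he]
  rfl

lemma zeroLocus_span_singleton {m : ℕ} (g : MvPolynomial (Fin m) ℂ) :
    MvPolynomial.zeroLocus ℂ (Ideal.span {g}) = {x | MvPolynomial.eval x g = 0} := by
  rw [MvPolynomial.zeroLocus_span]
  ext x; simp

lemma zeroLocus_sup_span_singleton {m : ℕ} (I : Ideal (MvPolynomial (Fin m) ℂ))
    (a : MvPolynomial (Fin m) ℂ) :
    MvPolynomial.zeroLocus ℂ (I ⊔ Ideal.span {a})
      = MvPolynomial.zeroLocus ℂ I ∩ {x | MvPolynomial.eval x a = 0} := by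
  ext x
  constructor
  · intro hx
    refine ⟨fun p hp => hx p (Ideal.mem_sup_left hp), hx a (Ideal.mem_sup_right (Ideal.subset_span rfl))⟩
  · rintro ⟨h1, h2⟩ p hp
    obtain ⟨y, hy, z, hz, rfl⟩ := Submodule.mem_sup.mp hp
    obtain ⟨r, rfl⟩ := Ideal.mem_span_singleton'.mp hz
    have h2' : MvPolynomial.aeval x a = 0 := h2
    simp only [map_add, _root_.map_mul, h1 y hy, h2', mul_zero, add_zero, zero_add]

end ZarAux

open MvPolynomial Ideal Polynomial Bornology Set

noncomputable section ZarAux2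

lemma continuous_mv_eval {m : ℕ} (h : MvPolynomial (Fin m) ℂ) :
    Continuous fun x : Fin m → ℂ => MvPolynomial.eval x h := by
  induction h using MvPolynomial.induction_on with
  | C a => simpa using continuous_const
  | add p q hp hq => simp only [map_add]; exact hp.add hq
  | mul_X p j hp => simp only [_root_.map_mul, MvPolynomial.eval_X]
                    exact hp.mul (continuous_apply j)

lemma isBounded_image_of_isBounded {m : ℕ} {ψ : (Fin m → ℂ) → (Fin m → ℂ)}
    (hψ : Continuous ψ) {S : Set (Fin m → ℂ)} (hS : IsBounded S) : IsBounded (ψ '' S) := by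
  have hK : IsCompact (closure S) := hS.isCompact_closure
  have := (hK.image hψ).isBounded
  exact this.subset (Set.image_mono subset_closure)

/-- The complement of a hypersurface in `ℂ^(n+1)` is unbounded. -/
lemma not_isBounded_compl_hypersurface {n : ℕ} {g : MvPolynomial (Fin (n + 1)) ℂ}
    (hg : g ≠ 0) : ¬ IsBounded {x : Fin (n + 1) → ℂ | MvPolynomial.eval x g ≠ 0} := by
  intro hbd
  obtain ⟨R, hR⟩ := isBounded_iff_forall_norm_le.mp hbd
  -- a point where g does not vanish
  have hx₀ : ∃ x₀ : Fin (n+1) → ℂ, MvPolynomial.eval x₀ g ≠ 0 := by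
    by_contra hc
    push_neg at hc
    exact hg (MvPolynomial.funext (fun x => by simpa using hc x))
  obtain ⟨x₀, hx₀⟩ := hx₀
  set e : Fin (n+1) → ℂ := fun j => if j = 0 then 1 else 0 with he
  set q : Polynomial ℂ := MvPolynomial.eval₂ Polynomial.C
      (fun j => Polynomial.C (x₀ j) + Polynomial.X * Polynomial.C (e j)) g with hq
  have hqe : ∀ t : ℂ, Polynomial.eval t q = MvPolynomial.eval (fun j => x₀ j + t * e j) g := by
    intro t
    rw [hq]
    have := MvPolynomial.eval₂_comp_left (Polynomial.evalRingHom t) Polynomial.C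
      (fun j => Polynomial.C (x₀ j) + Polynomial.X * Polynomial.C (e j)) g
    have this' : Polynomial.eval t (MvPolynomial.eval₂ Polynomial.C
        (fun j => Polynomial.C (x₀ j) + Polynomial.X * Polynomial.C (e j)) g)
        = MvPolynomial.eval₂ ((Polynomial.evalRingHom t).comp Polynomial.C)
          (⇑(Polynomial.evalRingHom t) ∘ fun j => Polynomial.C (x₀ j) + Polynomial.X * Polynomial.C (e j)) g := this
    rw [this']
    have h1 : (Polynomial.evalRingHom t).comp Polynomial.C = RingHom.id ℂ := by ext a; simp
    rw [h1]
    have h2 : ((Polynomial.evalRingHom t) ∘ fun j => Polynomial.C (x₀ j) + Polynomial.X * Polynomial.C (e j))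
        = fun j => x₀ j + t * e j := by funext j; simp; ring
    rw [h2]
    rfl
  have hq0 : q ≠ 0 := by
    intro hq0
    apply hx₀
    have := hqe 0
    rw [hq0] at this
    simp only [Polynomial.eval_zero] at this
    have hfun : (fun j => x₀ j + (0:ℂ) * e j) = x₀ := by funext j; ring
    rw [hfun] at this
    exact this.symm
  have hroots : IsBounded {t : ℂ | q.IsRoot t} := (Polynomial.finite_setOf_isRoot hq0).isBounded
  obtain ⟨R₂, hR₂⟩ := isBounded_iff_forall_norm_le.mp hroots
  set K : ℝ := max R 0 + max R₂ 0 + ‖x₀ 0‖ + 1 with hK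
  have hKnn : 0 ≤ K := by positivity
  set t : ℂ := (K : ℂ) with ht
  have hnt : ‖t‖ = K := by
    rw [ht]
    simpa using abs_of_nonneg hKnn
  have htroot : ¬ q.IsRoot t := by
    intro hroot
    have := hR₂ t hroot
    rw [hnt] at this
    have : K ≤ max R₂ 0 := le_trans this (le_max_left _ _)
    nlinarith [norm_nonneg (x₀ 0), le_max_right R 0, le_max_right R₂ 0, le_max_left R 0]
  set x : Fin (n+1) → ℂ := fun j => x₀ j + t * e j with hxdef
  have hxS : MvPolynomial.eval x g ≠ 0 := by
    rw [← hqe t]; exact htroot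
  have hx_le : ‖x‖ ≤ R := hR x hxS
  have h0 : x 0 = x₀ 0 + t := by simp [hxdef, he]
  have : ‖x 0‖ ≤ ‖x‖ := norm_le_pi_norm x 0
  have hlow : K - ‖x₀ 0‖ ≤ ‖x 0‖ := by
    have h3 : ‖t‖ ≤ ‖x₀ 0 + t‖ + ‖x₀ 0‖ := by
      calc ‖t‖ = ‖(x₀ 0 + t) - x₀ 0‖ := by ring_nf
      _ ≤ ‖x₀ 0 + t‖ + ‖x₀ 0‖ := norm_sub_le _ _
    rw [hnt] at h3
    rw [h0]
    linarith
  have : K - ‖x₀ 0‖ ≤ R := le_trans hlow (le_trans ‹‖x 0‖ ≤ ‖x‖› hx_le)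
  nlinarith [le_max_left R 0, le_max_right R₂ 0, le_max_left R₂ 0, le_max_right R 0]

end ZarAux2

open MvPolynomial Ideal Polynomial Bornology Set

noncomputable section ZarAux3

variable {n : ℕ}

/-- The substituted images of the variables, as one-variable polynomials over
`MvPolynomial (Fin n) ℂ`. -/
def vpoly (c : Fin n → ℂ) : Fin (n + 1) → Polynomial (MvPolynomial (Fin n) ℂ) :=
  Fin.cases Polynomial.X
    (fun i => Polynomial.C (MvPolynomial.X i) +
      Polynomial.C (MvPolynomial.C (c i)) * Polynomial.X)

lemma vpoly_natDegree_le (c : Fin n → ℂ) (j : Fin (n + 1)) : (vpoly c j).natDegree ≤ 1 := by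
  induction j using Fin.cases with
  | zero => simp [vpoly]
  | succ i =>
    simp only [vpoly, Fin.cases_succ]
    refine le_trans (Polynomial.natDegree_add_le _ _) ?_
    simp only [Polynomial.natDegree_C, max_le_iff]
    constructor
    · omega
    · exact le_trans (Polynomial.natDegree_C_mul_le _ _) (by simp)

lemma vpoly_coeff_zero (c : Fin n → ℂ) : (vpoly c 0).coeff 1 = 1 := by
  simp [vpoly]

lemma vpoly_coeff_succ (c : Fin n → ℂ) (i : Fin n) :
    (vpoly c i.succ).coeff 1 = MvPolynomial.C (c i) := by
  simp [vpoly, Polynomial.coeff_C]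

/-- coefficient of a product at the sum of the degree bounds -/
lemma coeff_prod_top {Rr : Type*} [CommSemiring Rr] {ι : Type*} (s : Finset ι)
    (q : ι → Polynomial Rr) (d : ι → ℕ) (h : ∀ i ∈ s, (q i).natDegree ≤ d i) :
    (∏ i ∈ s, q i).coeff (∑ i ∈ s, d i) = ∏ i ∈ s, (q i).coeff (d i) := by
  classical
  induction s using Finset.cons_induction with
  | empty => simp
  | cons a s ha ih =>
    rw [Finset.prod_cons, Finset.sum_cons, Finset.prod_cons]
    rw [Polynomial.coeff_mul_add_eq_of_natDegree_le (h a (Finset.mem_cons_self a s))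
      (le_trans (Polynomial.natDegree_prod_le _ _)
        (Finset.sum_le_sum (fun i hi => h i (Finset.mem_cons_of_mem hi))))]
    rw [ih (fun i hi => h i (Finset.mem_cons_of_mem hi))]

lemma coeff_pow_top {Rr : Type*} [CommSemiring Rr] (q : Polynomial Rr)
    (hq : q.natDegree ≤ 1) (e : ℕ) : (q ^ e).coeff e = (q.coeff 1) ^ e := by
  have := coeff_prod_top (Finset.range e) (fun _ => q) (fun _ => 1)
    (fun i _ => hq)
  simpa using this

lemma finsupp_sum_eq (μ : Fin (n + 1) →₀ ℕ) :
    (μ.sum fun _ e => e) = μ 0 + ∑ i : Fin n, μ i.succ := by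
  rw [Finsupp.sum_fintype _ _ (fun _ => rfl)]
  rw [Fin.sum_univ_succ]

lemma aeval_v_monomial (c : Fin n → ℂ) (μ : Fin (n + 1) →₀ ℕ) (a : ℂ) :
    MvPolynomial.aeval (vpoly c) (MvPolynomial.monomial μ a)
      = Polynomial.C (MvPolynomial.C a) * ∏ j : Fin (n + 1), (vpoly c j) ^ (μ j) := by
  rw [MvPolynomial.aeval_monomial, Finsupp.prod_fintype _ _ (fun _ => pow_zero _)]
  congr 1

lemma natDegree_aeval_v_monomial_le (c : Fin n → ℂ) (μ : Fin (n + 1) →₀ ℕ) (a : ℂ) :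
    (MvPolynomial.aeval (vpoly c) (MvPolynomial.monomial μ a)).natDegree
      ≤ μ.sum fun _ e => e := by
  rw [aeval_v_monomial]
  refine le_trans (Polynomial.natDegree_C_mul_le _ _) ?_
  refine le_trans (Polynomial.natDegree_prod_le _ _) ?_
  rw [Finsupp.sum_fintype _ _ (fun _ => rfl)]
  refine Finset.sum_le_sum (fun j _ => ?_)
  refine le_trans (Polynomial.natDegree_pow_le) ?_
  have := vpoly_natDegree_le c j
  nlinarith

lemma natDegree_aeval_v_le (c : Fin n → ℂ) (f : MvPolynomial (Fin (n + 1)) ℂ) :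
    (MvPolynomial.aeval (vpoly c) f).natDegree ≤ f.totalDegree := by
  have hrepr : MvPolynomial.aeval (vpoly c) f = ∑ μ ∈ f.support,
      MvPolynomial.aeval (vpoly c) (MvPolynomial.monomial μ (MvPolynomial.coeff μ f)) := by
    rw [← map_sum, MvPolynomial.support_sum_monomial_coeff]
  rw [hrepr]
  refine Polynomial.natDegree_sum_le_of_forall_le _ _ (fun μ hμ => ?_)
  exact le_trans (natDegree_aeval_v_monomial_le c μ _) (MvPolynomial.le_totalDegree hμ)

/-- Top coefficient of the substituted polynomial. -/
lemma coeff_aeval_v_totalDegree (c : Fin n → ℂ) (f : MvPolynomial (Fin (n + 1)) ℂ) :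
    (MvPolynomial.aeval (vpoly c) f).coeff f.totalDegree
      = MvPolynomial.C (∑ μ ∈ f.support,
          if (μ.sum fun _ e => e) = f.totalDegree
          then MvPolynomial.coeff μ f * ∏ i : Fin n, (c i) ^ (μ i.succ) else 0) := by
  classical
  have hrepr : MvPolynomial.aeval (vpoly c) f = ∑ μ ∈ f.support,
      MvPolynomial.aeval (vpoly c) (MvPolynomial.monomial μ (MvPolynomial.coeff μ f)) := by
    rw [← map_sum, MvPolynomial.support_sum_monomial_coeff]
  rw [hrepr, Polynomial.finset_sum_coeff, map_sum]
  refine Finset.sum_congr rfl (fun μ hμ => ?_)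
  by_cases hd : (μ.sum fun _ e => e) = f.totalDegree
  · rw [if_pos hd, aeval_v_monomial, Polynomial.coeff_C_mul, ← hd]
    have hsum : (μ.sum fun _ e => e) = ∑ j : Fin (n + 1), μ j :=
      Finsupp.sum_fintype _ _ (fun _ => rfl)
    rw [hsum]
    rw [coeff_prod_top Finset.univ (fun j => (vpoly c j) ^ (μ j)) (fun j => μ j)
      (fun j _ => le_trans Polynomial.natDegree_pow_le
        (by have := vpoly_natDegree_le c j; nlinarith))]
    have hcp : ∀ j : Fin (n + 1), ((vpoly c j) ^ (μ j)).coeff (μ j)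
        = ((vpoly c j).coeff 1) ^ (μ j) :=
      fun j => coeff_pow_top _ (vpoly_natDegree_le c j) _
    simp only [hcp]
    rw [Fin.prod_univ_succ, vpoly_coeff_zero, one_pow, one_mul]
    simp only [vpoly_coeff_succ, ← map_pow, ← map_prod, ← _root_.map_mul]
  · rw [if_neg hd]
    have hlt : (μ.sum fun _ e => e) < f.totalDegree :=
      lt_of_le_of_ne (MvPolynomial.le_totalDegree hμ) hd
    rw [Polynomial.coeff_eq_zero_of_natDegree_lt
      (lt_of_le_of_lt (natDegree_aeval_v_monomial_le c μ _) hlt), map_zero]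

/-- There is a choice of shear coefficients making the top coefficient nonzero. -/
lemma exists_good_c (f : MvPolynomial (Fin (n + 1)) ℂ) (hf : f ≠ 0) :
    ∃ c : Fin n → ℂ,
      (∑ μ ∈ f.support, if (μ.sum fun _ e => e) = f.totalDegree
        then MvPolynomial.coeff μ f * ∏ i : Fin n, (c i) ^ (μ i.succ) else 0) ≠ 0 := by
  classical
  set d := f.totalDegree with hd
  set W : MvPolynomial (Fin n) ℂ := ∑ μ ∈ f.support,
    if (μ.sum fun _ e => e) = d
    then MvPolynomial.monomial (Finsupp.tail μ) (MvPolynomial.coeff μ f) else 0 with hW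
  have heval : ∀ c : Fin n → ℂ, MvPolynomial.eval c W
      = ∑ μ ∈ f.support, if (μ.sum fun _ e => e) = d
        then MvPolynomial.coeff μ f * ∏ i : Fin n, (c i) ^ (μ i.succ) else 0 := by
    intro c
    rw [hW, map_sum]
    refine Finset.sum_congr rfl (fun μ _ => ?_)
    split_ifs with h
    · rw [MvPolynomial.eval_monomial]
      congr 1
      rw [Finsupp.prod_fintype _ _ (fun _ => pow_zero _)]
      exact Finset.prod_congr rfl (fun i _ => by rw [Finsupp.tail_apply])
    · simp
  -- W is nonzero
  obtain ⟨μs, hμs, hμsd⟩ := Finset.exists_mem_eq_sup f.support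
    (MvPolynomial.support_nonempty.mpr hf) (fun μ => μ.sum fun _ e => e)
  have hsumd : (μs.sum fun _ e => e) = d := hμsd.symm
  have hWne : W ≠ 0 := by
    intro hW0
    have hcoeff : MvPolynomial.coeff (Finsupp.tail μs) W = MvPolynomial.coeff μs f := by
      rw [hW, MvPolynomial.coeff_sum]
      rw [Finset.sum_eq_single_of_mem μs hμs ?side]
      · rw [if_pos hsumd, MvPolynomial.coeff_monomial, if_pos rfl]
      case side =>
        intro b hb hbne
        split_ifs with hbs
        · rw [MvPolynomial.coeff_monomial]
          rw [if_neg ?tailne]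
          case tailne =>
            intro htail
            apply hbne
            have hsb : (b.sum fun _ e => e) = b 0 + ∑ i : Fin n, b i.succ := finsupp_sum_eq b
            have hsμ : (μs.sum fun _ e => e) = μs 0 + ∑ i : Fin n, μs i.succ := finsupp_sum_eq μs
            have htails : ∀ i : Fin n, b i.succ = μs i.succ := by
              intro i
              have h1 : Finsupp.tail b i = Finsupp.tail μs i := by rw [htail]
              rwa [Finsupp.tail_apply, Finsupp.tail_apply] at h1
            have hsum_eq : (∑ i : Fin n, b i.succ) = ∑ i : Fin n, μs i.succ :=
              Finset.sum_congr rfl (fun i _ => htails i)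
            have h0 : b 0 = μs 0 := by
              rw [hbs] at hsb
              rw [hsumd] at hsμ
              omega
            ext j
            induction j using Fin.cases with
            | zero => exact h0
            | succ i => exact htails i
        · rfl
    rw [hW0] at hcoeff
    simp only [MvPolynomial.coeff_zero] at hcoeff
    exact (MvPolynomial.mem_support_iff.mp hμs) hcoeff.symm
  by_contra hc
  push_neg at hc
  apply hWne
  apply MvPolynomial.funext
  intro x
  rw [heval x, map_zero]
  exact hc x

end ZarAux3

open MvPolynomial Ideal Polynomial Bornology Set

noncomputable section ZarAux4
variable {n : ℕ}

/-- Shear substitution on variables. -/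
def upoly (c : Fin n → ℂ) : Fin (n + 1) → MvPolynomial (Fin (n + 1)) ℂ :=
  Fin.cases (MvPolynomial.X 0)
    (fun i => MvPolynomial.X i.succ + MvPolynomial.C (c i) * MvPolynomial.X 0)

/-- The shear algebra endomorphism. -/
def phiH (c : Fin n → ℂ) : MvPolynomial (Fin (n + 1)) ℂ →ₐ[ℂ] MvPolynomial (Fin (n + 1)) ℂ :=
  MvPolynomial.aeval (upoly c)

lemma phi_comp (c : Fin n → ℂ) :
    (phiH c).comp (phiH (-c)) = AlgHom.id ℂ (MvPolynomial (Fin (n + 1)) ℂ) := by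
  apply MvPolynomial.algHom_ext
  intro j
  induction j using Fin.cases with
  | zero => simp [phiH, upoly]
  | succ i =>
    simp only [AlgHom.coe_comp, Function.comp_apply, AlgHom.id_apply, phiH, upoly,
      MvPolynomial.aeval_X, Fin.cases_succ, map_add, _root_.map_mul, MvPolynomial.aeval_C,
      MvPolynomial.algebraMap_eq, Fin.cases_zero, Pi.neg_apply, map_neg]
    ring

lemma phi_phi_neg (c : Fin n → ℂ) (h : MvPolynomial (Fin (n + 1)) ℂ) :
    phiH c (phiH (-c) h) = h := by
  have := congrArg (fun F => (F : _ →ₐ[ℂ] _) h) (phi_comp c)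
  simpa using this

lemma phi_neg_phi (c : Fin n → ℂ) (h : MvPolynomial (Fin (n + 1)) ℂ) :
    phiH (-c) (phiH c h) = h := by
  have := phi_phi_neg (-c) h
  rwa [neg_neg] at this

lemma finSuccEquiv_phi (c : Fin n → ℂ) (h : MvPolynomial (Fin (n + 1)) ℂ) :
    MvPolynomial.finSuccEquiv ℂ n (phiH c h) = MvPolynomial.aeval (vpoly c) h := by
  have hcomp : ((MvPolynomial.finSuccEquiv ℂ n : MvPolynomial (Fin (n+1)) ℂ ≃ₐ[ℂ] _).toAlgHom.comp
      (phiH c)) = MvPolynomial.aeval (vpoly c) := by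
    apply MvPolynomial.algHom_ext
    intro j
    induction j using Fin.cases with
    | zero =>
      simp [phiH, upoly, vpoly, MvPolynomial.finSuccEquiv_X_zero]
    | succ i =>
      simp only [AlgEquiv.toAlgHom_eq_coe, AlgHom.coe_comp, AlgHom.coe_coe, Function.comp_apply,
        phiH, upoly, MvPolynomial.aeval_X, Fin.cases_succ, map_add, _root_.map_mul,
        MvPolynomial.aeval_C, MvPolynomial.algebraMap_eq,
        MvPolynomial.finSuccEquiv_X_succ, MvPolynomial.finSuccEquiv_X_zero, vpoly]
      have hC : (MvPolynomial.finSuccEquiv ℂ n) (MvPolynomial.C (c i))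
          = Polynomial.C (MvPolynomial.C (c i)) := by
        rw [← MvPolynomial.algebraMap_eq, AlgEquiv.commutes, Polynomial.algebraMap_apply,
          MvPolynomial.algebraMap_eq]
      simp only [AlgEquiv.coe_toAlgHom, AlgHom.coe_coe, MvPolynomial.finSuccEquiv_X_succ,
        MvPolynomial.finSuccEquiv_X_zero, hC]
  exact congrArg (fun F => F h) hcomp

/-- point map associated to the shear -/
def ptmap (c : Fin n → ℂ) (x : Fin (n + 1) → ℂ) : Fin (n + 1) → ℂ :=
  fun j => Fin.cases (motive := fun _ => ℂ) (x 0) (fun i => x i.succ + c i * x 0) j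

lemma eval_phi (c : Fin n → ℂ) (x : Fin (n + 1) → ℂ) (h : MvPolynomial (Fin (n + 1)) ℂ) :
    MvPolynomial.eval x (phiH c h) = MvPolynomial.eval (ptmap c x) h := by
  rw [phiH, eval_aeval_comp]
  have : (fun j => MvPolynomial.eval x (upoly c j)) = ptmap c x := by
    funext j
    induction j using Fin.cases with
    | zero => simp [upoly, ptmap]
    | succ i => simp [upoly, ptmap]
  rw [this]

lemma ptmap_invol (c : Fin n → ℂ) (x : Fin (n + 1) → ℂ) :
    ptmap c (ptmap (-c) x) = x := by
  funext j
  induction j using Fin.cases with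
  | zero => simp [ptmap]
  | succ i =>
    simp only [ptmap, Fin.cases_succ, Fin.cases_zero, Pi.neg_apply]
    ring

lemma ptmap_continuous (c : Fin n → ℂ) : Continuous (ptmap c) := by
  apply continuous_pi
  intro j
  induction j using Fin.cases with
  | zero => exact continuous_apply 0
  | succ i =>
    simp only [ptmap, Fin.cases_succ]
    exact ((continuous_apply _).add (continuous_const.mul (continuous_apply 0)))

end ZarAux4


noncomputable section ZarAux5

/-- If `a ≠ 0` is integral over `B` inside a domain `A`, some element of `B` with nonzero
image lies in the ideal generated by `a`. -/
lemma exists_algebraMap_mem_span {B A : Type*} [CommRing B] [CommRing A] [IsDomain A]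
    [Algebra B A] (a : A) (ha : a ≠ 0) (hint : IsIntegral B a) :
    ∃ b : B, algebraMap B A b ≠ 0 ∧ algebraMap B A b ∈ Ideal.span {a} := by
  obtain ⟨P, hPm, hP⟩ := hint
  have haux : ∀ d : ℕ, ∀ P : Polynomial B, P.Monic → P.natDegree ≤ d →
      Polynomial.aeval a P = 0 →
      ∃ b : B, algebraMap B A b ≠ 0 ∧ algebraMap B A b ∈ Ideal.span {a} := by
    intro d
    induction d with
    | zero =>
      intro P hm hdeg hev
      have : P = 1 := hm.natDegree_eq_zero.mp (Nat.le_zero.mp hdeg)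
      rw [this] at hev
      simp at hev
    | succ d ih =>
      intro P hm hdeg hev
      by_cases hd0 : P.natDegree = 0
      · have : P = 1 := hm.natDegree_eq_zero.mp hd0
        rw [this] at hev
        simp at hev
      · have hrel : a * Polynomial.aeval a P.divX + algebraMap B A (P.coeff 0) = 0 := by
          have := Polynomial.X_mul_divX_add P
          calc a * Polynomial.aeval a P.divX + algebraMap B A (P.coeff 0)
              = Polynomial.aeval a (Polynomial.X * P.divX + Polynomial.C (P.coeff 0)) := by
                rw [map_add, _root_.map_mul, Polynomial.aeval_X, Polynomial.aeval_C]
            _ = Polynomial.aeval a P := by rw [this]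
            _ = 0 := hev
        by_cases hb : algebraMap B A (P.coeff 0) = 0
        · -- recurse on divX
          have hdiv0 : a * Polynomial.aeval a P.divX = 0 := by
            rw [hb, add_zero] at hrel; exact hrel
          have hdivev : Polynomial.aeval a P.divX = 0 := by
            rcases mul_eq_zero.mp hdiv0 with h | h
            · exact absurd h ha
            · exact h
          have hdm : P.divX.Monic := by
            unfold Polynomial.Monic
            rw [Polynomial.leadingCoeff, Polynomial.natDegree_divX_eq_natDegree_tsub_one,
              Polynomial.coeff_divX]
            have h1 : P.natDegree - 1 + 1 = P.natDegree := by omega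
            rw [h1]
            exact hm
          refine ih P.divX hdm ?_ hdivev
          rw [Polynomial.natDegree_divX_eq_natDegree_tsub_one]
          omega
        · refine ⟨P.coeff 0, hb, ?_⟩
          rw [Ideal.mem_span_singleton]
          exact ⟨-Polynomial.aeval a P.divX, by linear_combination hrel⟩
  exact haux P.natDegree P hPm le_rfl hP

set_option maxHeartbeats 1600000 in
/-- The key inductive step: a prime with a monic (in the distinguished variable) element. -/
lemma prime_step {n : ℕ}
    (IH : ∀ (p : Ideal (MvPolynomial (Fin n) ℂ)), p.IsPrime →
      ∀ g, g ∉ p → IsBounded (MvPolynomial.zeroLocus ℂ p \ MvPolynomial.zeroLocus ℂ (Ideal.span {g})) →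
      (MvPolynomial.zeroLocus ℂ p).Finite)
    (q : Ideal (MvPolynomial (Fin (n + 1)) ℂ)) (hq : q.IsPrime)
    (g : MvPolynomial (Fin (n + 1)) ℂ) (hg : g ∉ q)
    (h : MvPolynomial (Fin (n + 1)) ℂ) (hh : h ∈ q)
    (hmon : (MvPolynomial.finSuccEquiv ℂ n h).Monic)
    (hbd : IsBounded (MvPolynomial.zeroLocus ℂ q \ MvPolynomial.zeroLocus ℂ (Ideal.span {g}))) :
    (MvPolynomial.zeroLocus ℂ q).Finite := by
  classical
  set ι : (MvPolynomial (Fin n) ℂ) →ₐ[ℂ] MvPolynomial (Fin (n + 1)) ℂ := MvPolynomial.rename Fin.succ with hι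
  set p' : Ideal (MvPolynomial (Fin n) ℂ) := q.comap ι.toRingHom with hp'
  haveI hp'prime : p'.IsPrime := Ideal.IsPrime.comap _
  set Q : Polynomial (MvPolynomial (Fin n) ℂ) := MvPolynomial.finSuccEquiv ℂ n h with hQ
  -- reconstruction of h from Q
  have hrecon : Polynomial.eval₂ ι.toRingHom (MvPolynomial.X 0) Q = h := by
    have hcomp : ∀ r : MvPolynomial (Fin (n + 1)) ℂ,
        (Polynomial.eval₂RingHom ι.toRingHom (MvPolynomial.X 0)).comp
          (MvPolynomial.finSuccEquiv ℂ n : MvPolynomial (Fin (n+1)) ℂ →+* Polynomial (MvPolynomial (Fin n) ℂ)) r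
        = r := by
      intro r
      have : (Polynomial.eval₂RingHom ι.toRingHom (MvPolynomial.X 0)).comp
          ((MvPolynomial.finSuccEquiv ℂ n : MvPolynomial (Fin (n+1)) ℂ →+* Polynomial (MvPolynomial (Fin n) ℂ)))
          = RingHom.id _ := by
        apply MvPolynomial.ringHom_ext
        · intro a
          simp only [RingHom.comp_apply, RingHom.id_apply, RingHom.coe_coe]
          have hC : (MvPolynomial.finSuccEquiv ℂ n) (MvPolynomial.C a)
              = Polynomial.C (MvPolynomial.C a) := by
            rw [← MvPolynomial.algebraMap_eq, AlgEquiv.commutes, Polynomial.algebraMap_apply,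
              MvPolynomial.algebraMap_eq]
          rw [hC]
          simp only [Polynomial.coe_eval₂RingHom, Polynomial.eval₂_C, hι,
            AlgHom.toRingHom_eq_coe, RingHom.coe_coe]
          rw [MvPolynomial.rename_C]
        · intro j
          induction j using Fin.cases with
          | zero =>
            simp only [RingHom.comp_apply, RingHom.id_apply, RingHom.coe_coe,
              MvPolynomial.finSuccEquiv_X_zero]
            simp
          | succ i =>
            simp only [RingHom.comp_apply, RingHom.id_apply, RingHom.coe_coe,
              MvPolynomial.finSuccEquiv_X_succ]
            simp only [Polynomial.coe_eval₂RingHom, Polynomial.eval₂_C, hι,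
              AlgHom.toRingHom_eq_coe, RingHom.coe_coe]
            rw [MvPolynomial.rename_X]
      exact congrArg (fun F => F r) this
    have := hcomp h
    simpa using this
  set A := MvPolynomial (Fin (n + 1)) ℂ ⧸ q with hA
  letI : Algebra (MvPolynomial (Fin n) ℂ) A := ((Ideal.Quotient.mk q).comp ι.toRingHom).toAlgebra
  letI : Module (MvPolynomial (Fin n) ℂ) A := Algebra.toModule
  have halg : (algebraMap (MvPolynomial (Fin n) ℂ) A) = (Ideal.Quotient.mk q).comp ι.toRingHom := rfl
  set t : A := Ideal.Quotient.mk q (MvPolynomial.X 0) with hT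
  have hker : RingHom.ker (algebraMap (MvPolynomial (Fin n) ℂ) A) = p' := by
    rw [halg, ← RingHom.comap_ker, Ideal.mk_ker]
  have htint : IsIntegral (MvPolynomial (Fin n) ℂ) t := by
    refine ⟨Q, hmon, ?_⟩
    show Polynomial.eval₂ (algebraMap (MvPolynomial (Fin n) ℂ) A) t Q = 0
    rw [halg, hT]
    rw [← Polynomial.hom_eval₂]
    rw [hrecon]
    exact (Ideal.Quotient.eq_zero_iff_mem).mpr hh
  -- A is module-finite, hence integral, over R'
  have hadj : Algebra.adjoin (MvPolynomial (Fin n) ℂ) {t} = ⊤ := by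
    rw [eq_top_iff]
    rintro a -
    obtain ⟨r, rfl⟩ := Ideal.Quotient.mk_surjective a
    induction r using MvPolynomial.induction_on with
    | C a =>
      have : (Ideal.Quotient.mk q) (MvPolynomial.C a) = algebraMap (MvPolynomial (Fin n) ℂ) A (MvPolynomial.C a) := by
        rw [halg]; simp [hι]
      rw [this]
      exact Subalgebra.algebraMap_mem _ _
    | add r s hr hs =>
      rw [map_add]; exact add_mem hr hs
    | mul_X r j hr =>
      rw [_root_.map_mul]
      refine mul_mem hr ?_
      induction j using Fin.cases with
      | zero => exact Algebra.subset_adjoin rfl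
      | succ i =>
        have : (Ideal.Quotient.mk q) (MvPolynomial.X i.succ)
            = algebraMap (MvPolynomial (Fin n) ℂ) A (MvPolynomial.X i) := by
          rw [halg]; simp [hι]
        rw [this]
        exact Subalgebra.algebraMap_mem _ _
  haveI hfin : Module.Finite (MvPolynomial (Fin n) ℂ) A := by
    constructor
    rw [← Algebra.top_toSubmodule, ← hadj]
    exact htint.fg_adjoin_singleton
  haveI hAint : Algebra.IsIntegral (MvPolynomial (Fin n) ℂ) A := Algebra.IsIntegral.of_finite (MvPolynomial (Fin n) ℂ) A
  -- the nonzero "norm-like" element b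
  have hgbar : (Ideal.Quotient.mk q) g ≠ 0 := by
    intro h0
    exact hg ((Ideal.Quotient.eq_zero_iff_mem).mp h0)
  obtain ⟨b, hb0, hbmem⟩ := exists_algebraMap_mem_span (B := MvPolynomial (Fin n) ℂ) ((Ideal.Quotient.mk q) g)
    hgbar (Algebra.IsIntegral.isIntegral _)
  have hbnotp' : b ∉ p' := by
    intro hbp'
    apply hb0
    rw [← hker] at hbp'
    exact hbp'
  -- the lifting property
  have hlift : ∀ a' ∈ MvPolynomial.zeroLocus ℂ p' \ MvPolynomial.zeroLocus ℂ (Ideal.span {b}),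
      ∃ z ∈ MvPolynomial.zeroLocus ℂ q \ MvPolynomial.zeroLocus ℂ (Ideal.span {g}),
        Fin.tail z = a' := by
    rintro a' ⟨ha'p, ha'b⟩
    have hvi : RingHom.ker (algebraMap (MvPolynomial (Fin n) ℂ) A) ≤ MvPolynomial.vanishingIdeal ℂ {a'} := by
      rw [hker]
      intro r hr x hx
      rw [Set.mem_singleton_iff.mp hx]
      exact ha'p r hr
    obtain ⟨Qm, hQmmax, hQmcomap⟩ :=
      Ideal.exists_ideal_over_maximal_of_isIntegral (MvPolynomial.vanishingIdeal ℂ {a'}) hvi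
    have hgQm : (Ideal.Quotient.mk q) g ∉ Qm := by
      intro hmem
      have hspan : Ideal.span {(Ideal.Quotient.mk q) g} ≤ Qm := by
        rw [Ideal.span_le]; simpa using hmem
      have : b ∈ Ideal.comap (algebraMap (MvPolynomial (Fin n) ℂ) A) Qm := hspan hbmem
      rw [hQmcomap] at this
      have : MvPolynomial.eval a' b = 0 :=
        (MvPolynomial.mem_vanishingIdeal_singleton_iff a' b).mp this
      apply ha'b
      rw [zeroLocus_span_singleton]
      exact this
    set M := Ideal.comap (Ideal.Quotient.mk q) Qm with hM
    haveI hMmax : M.IsMaximal :=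
      Ideal.comap_isMaximal_of_surjective _ Ideal.Quotient.mk_surjective
    obtain ⟨z, hz⟩ := (MvPolynomial.isMaximal_iff_eq_vanishingIdeal_singleton (I := M)).mp hMmax
    have hMz : ∀ r, r ∈ M → MvPolynomial.eval z r = 0 := by
      intro r hr
      rw [hz] at hr
      exact (MvPolynomial.mem_vanishingIdeal_singleton_iff z r).mp hr
    refine ⟨z, ⟨?_, ?_⟩, ?_⟩
    · intro r hr
      exact hMz r (by
        show (Ideal.Quotient.mk q) r ∈ Qm
        rw [(Ideal.Quotient.eq_zero_iff_mem).mpr hr]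
        exact zero_mem _)
    · intro hzg
      rw [zeroLocus_span_singleton] at hzg
      have : g ∈ M := by
        rw [hz]
        exact (MvPolynomial.mem_vanishingIdeal_singleton_iff z g).mpr hzg
      exact hgQm this
    · funext i
      have hmem : (MvPolynomial.X i - MvPolynomial.C (a' i) : MvPolynomial (Fin n) ℂ)
          ∈ MvPolynomial.vanishingIdeal ℂ ({a'} : Set (Fin n → ℂ)) := by
        rw [MvPolynomial.mem_vanishingIdeal_singleton_iff]
        simp
      rw [← hQmcomap] at hmem
      have h2 : ι.toRingHom (MvPolynomial.X i - MvPolynomial.C (a' i)) ∈ M := hmem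
      have h3 := hMz _ h2
      simp only [hι, map_sub, AlgHom.toRingHom_eq_coe, RingHom.coe_coe] at h3
      rw [MvPolynomial.rename_X, MvPolynomial.rename_C] at h3
      simp only [map_sub, MvPolynomial.eval_X, MvPolynomial.eval_C] at h3
      show z i.succ = a' i
      exact sub_eq_zero.mp h3
  -- boundedness downstairs
  obtain ⟨Rb, hRb⟩ := isBounded_iff_forall_norm_le.mp hbd
  have hbd' : IsBounded (MvPolynomial.zeroLocus ℂ p' \ MvPolynomial.zeroLocus ℂ (Ideal.span {b})) := by
    rw [isBounded_iff_forall_norm_le]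
    refine ⟨max Rb 0, fun a' ha' => ?_⟩
    obtain ⟨z, hzS, hztail⟩ := hlift a' ha'
    have hz_le : ‖z‖ ≤ Rb := hRb z hzS
    refine (pi_norm_le_iff_of_nonneg (le_max_right _ _)).mpr (fun i => ?_)
    have h1 : a' i = z i.succ := (congrFun hztail i).symm
    rw [h1]
    exact le_trans (norm_le_pi_norm z i.succ) (le_trans hz_le (le_max_left _ _))
  have hfinp' : (MvPolynomial.zeroLocus ℂ p').Finite := IH p' hp'prime b hbnotp' hbd'
  -- the fiber description
  have hcover : MvPolynomial.zeroLocus ℂ q ⊆ ⋃ a' ∈ MvPolynomial.zeroLocus ℂ p',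
      {z : Fin (n+1) → ℂ | Fin.tail z = a'
        ∧ (Q.map (MvPolynomial.eval a')).IsRoot (z 0)} := by
    intro z hzq
    have htail : Fin.tail z ∈ MvPolynomial.zeroLocus ℂ p' := by
      intro r hr
      have hiq : ι.toRingHom r ∈ q := hr
      have : MvPolynomial.eval z (ι.toRingHom r) = 0 := hzq _ hiq
      have heq : MvPolynomial.eval z (ι.toRingHom r)
          = MvPolynomial.eval (Fin.tail z) r := by
        show MvPolynomial.eval z (MvPolynomial.rename Fin.succ r) = _
        rw [MvPolynomial.eval_rename]
        rfl
      rwa [heq] at this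
    refine Set.mem_biUnion htail ⟨rfl, ?_⟩
    have hevalh : MvPolynomial.eval z h = 0 := hzq h hh
    have hz' : Fin.cons (z 0) (Fin.tail z) = z := Fin.cons_self_tail z
    have hkey := MvPolynomial.eval_eq_eval_mv_eval' (Fin.tail z) (z 0) h
    rw [hz'] at hkey
    show Polynomial.eval (z 0) (Polynomial.map (MvPolynomial.eval (Fin.tail z)) Q) = 0
    rw [hQ, ← hkey]
    exact hevalh
  have hfibers : ∀ a' ∈ MvPolynomial.zeroLocus ℂ p',
      ({z : Fin (n+1) → ℂ | Fin.tail z = a'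
        ∧ (Q.map (MvPolynomial.eval a')).IsRoot (z 0)}).Finite := by
    intro a' _
    have hQa : (Q.map (MvPolynomial.eval a')) ≠ 0 := (hmon.map _).ne_zero
    have hroots : {y : ℂ | (Q.map (MvPolynomial.eval a')).IsRoot y}.Finite :=
      Polynomial.finite_setOf_isRoot hQa
    apply Set.Finite.of_finite_image (f := fun z => z 0)
    · refine hroots.subset ?_
      rintro y ⟨z, ⟨hz1, hz2⟩, rfl⟩
      exact hz2
    · rintro z ⟨hz1, hz2⟩ w ⟨hw1, hw2⟩ h0
      funext j
      induction j using Fin.cases with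
      | zero => exact h0
      | succ i =>
        have hzi : z i.succ = a' i := congrFun hz1 i
        have hwi : w i.succ = a' i := congrFun hw1 i
        rw [hzi, hwi]
  exact ((hfinp'.biUnion hfibers).subset hcover)

end ZarAux5

noncomputable section ZarAux6

set_option maxHeartbeats 1600000 in
/-- a bounded "distinguished open" piece of a prime variety forces the variety to be finite -/
theorem prime_finite : ∀ n : ℕ, ∀ (p : Ideal (MvPolynomial (Fin n) ℂ)), p.IsPrime →
    ∀ g, g ∉ p →
    IsBounded (MvPolynomial.zeroLocus ℂ p \ MvPolynomial.zeroLocus ℂ (Ideal.span {g})) →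
    (MvPolynomial.zeroLocus ℂ p).Finite := by
  intro n
  induction n with
  | zero =>
    intro p _ g _ _
    have : Subsingleton (Fin 0 → ℂ) := by infer_instance
    exact Set.subsingleton_of_subsingleton.finite
  | succ n IH =>
    intro p hp g hg hbd
    by_cases hbot : p = ⊥
    · exfalso
      subst hbot
      have hg0 : g ≠ 0 := by simpa using hg
      apply not_isBounded_compl_hypersurface hg0
      have hEq : MvPolynomial.zeroLocus ℂ (⊥ : Ideal (MvPolynomial (Fin (n+1)) ℂ))
          \ MvPolynomial.zeroLocus ℂ (Ideal.span {g})
          = {x : Fin (n+1) → ℂ | MvPolynomial.eval x g ≠ 0} := by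
        rw [MvPolynomial.zeroLocus_bot, zeroLocus_span_singleton]
        ext x
        simp [Set.mem_diff]
      rwa [hEq] at hbd
    · obtain ⟨f, hfp, hf0⟩ := Submodule.exists_mem_ne_zero_of_ne_bot hbot
      obtain ⟨c, hc⟩ := exists_good_c f hf0
      set s : ℂ := (∑ μ ∈ f.support, if (μ.sum fun _ e => e) = f.totalDegree
        then MvPolynomial.coeff μ f * ∏ i : Fin n, (c i) ^ (μ i.succ) else 0) with hs
      set lam : ℂ := s⁻¹ with hlam
      set f' : MvPolynomial (Fin (n+1)) ℂ := MvPolynomial.C lam * f with hf'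
      have hf'p : f' ∈ p := Ideal.mul_mem_left _ _ hfp
      have hmon : (MvPolynomial.aeval (vpoly c) f').Monic := by
        have hCmul : MvPolynomial.aeval (vpoly c) f'
            = Polynomial.C (MvPolynomial.C lam) * MvPolynomial.aeval (vpoly c) f := by
          rw [hf', _root_.map_mul]
          congr 1
          rw [MvPolynomial.aeval_C, Polynomial.algebraMap_apply, MvPolynomial.algebraMap_eq]
        apply Polynomial.monic_of_natDegree_le_of_coeff_eq_one f.totalDegree
        · rw [hCmul]
          exact le_trans (Polynomial.natDegree_C_mul_le _ _) (natDegree_aeval_v_le c f)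
        · rw [hCmul, Polynomial.coeff_C_mul, coeff_aeval_v_totalDegree, ← hs,
            ← _root_.map_mul, hlam, inv_mul_cancel₀ hc, MvPolynomial.C_1]
      -- transfer along the shear automorphism
      set q : Ideal (MvPolynomial (Fin (n+1)) ℂ) := Ideal.comap (phiH (-c)).toRingHom p with hqdef
      haveI hqprime : q.IsPrime := Ideal.IsPrime.comap _
      have hmemq : ∀ r, r ∈ q ↔ phiH (-c) r ∈ p := fun r => Iff.rfl
      have hhq : phiH c f' ∈ q := by
        rw [hmemq, phi_neg_phi]
        exact hf'p
      have hgq : phiH c g ∉ q := by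
        rw [hmemq, phi_neg_phi]
        exact hg
      have hmonq : (MvPolynomial.finSuccEquiv ℂ n (phiH c f')).Monic := by
        rw [finSuccEquiv_phi]
        exact hmon
      have hVq : MvPolynomial.zeroLocus ℂ q = ptmap c ⁻¹' MvPolynomial.zeroLocus ℂ p := by
        ext x
        constructor
        · intro hx r hr
          have hrq : phiH c r ∈ q := by
            rw [hmemq, phi_neg_phi]
            exact hr
          have : MvPolynomial.eval x (phiH c r) = 0 := hx _ hrq
          rwa [eval_phi] at this
        · intro hx r hr
          have : r = phiH c (phiH (-c) r) := (phi_phi_neg c r).symm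
          change MvPolynomial.eval x r = 0
          rw [this, eval_phi]
          exact hx _ hr
      have hVgq : MvPolynomial.zeroLocus ℂ (Ideal.span {phiH c g})
          = ptmap c ⁻¹' MvPolynomial.zeroLocus ℂ (Ideal.span {g}) := by
        ext x
        rw [zeroLocus_span_singleton]
        simp only [Set.mem_preimage, zeroLocus_span_singleton, Set.mem_setOf_eq]
        rw [eval_phi]
      have hSq : MvPolynomial.zeroLocus ℂ q \ MvPolynomial.zeroLocus ℂ (Ideal.span {phiH c g})
          = ptmap c ⁻¹' (MvPolynomial.zeroLocus ℂ p \ MvPolynomial.zeroLocus ℂ (Ideal.span {g})) := by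
        rw [hVq, hVgq, Set.preimage_diff]
      have hpre : ptmap c ⁻¹' (MvPolynomial.zeroLocus ℂ p \ MvPolynomial.zeroLocus ℂ (Ideal.span {g}))
          = ptmap (-c) '' (MvPolynomial.zeroLocus ℂ p \ MvPolynomial.zeroLocus ℂ (Ideal.span {g})) := by
        ext x
        constructor
        · intro hx
          refine ⟨ptmap c x, hx, ?_⟩
          have := ptmap_invol (-c) x
          rwa [neg_neg] at this
        · rintro ⟨y, hy, rfl⟩
          rw [Set.mem_preimage, ptmap_invol c y]
          exact hy
      have hbdq : IsBounded (MvPolynomial.zeroLocus ℂ q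
          \ MvPolynomial.zeroLocus ℂ (Ideal.span {phiH c g})) := by
        rw [hSq, hpre]
        exact isBounded_image_of_isBounded (ptmap_continuous (-c)) hbd
      have hVqfin : (MvPolynomial.zeroLocus ℂ q).Finite :=
        prime_step IH q hqprime (phiH c g) hgq (phiH c f') hhq hmonq hbdq
      have hVp : MvPolynomial.zeroLocus ℂ p = ptmap c '' MvPolynomial.zeroLocus ℂ q := by
        rw [hVq]
        rw [Set.image_preimage_eq _ (fun x => ⟨ptmap (-c) x, ptmap_invol c x⟩)]
      rw [hVp]
      exact hVqfin.image _

/-- general ideal case -/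
theorem ideal_case (n : ℕ) (I : Ideal (MvPolynomial (Fin n) ℂ)) :
    ∀ g : MvPolynomial (Fin n) ℂ, IsBounded (MvPolynomial.zeroLocus ℂ I \ MvPolynomial.zeroLocus ℂ (Ideal.span {g})) →
    (MvPolynomial.zeroLocus ℂ I \ MvPolynomial.zeroLocus ℂ (Ideal.span {g})).Finite := by
  refine IsWellFounded.induction
    (α := Ideal (MvPolynomial (Fin n) ℂ)) (· > ·)
    (motive := fun I => ∀ g : MvPolynomial (Fin n) ℂ, IsBounded (MvPolynomial.zeroLocus ℂ I
        \ MvPolynomial.zeroLocus ℂ (Ideal.span {g})) →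
      (MvPolynomial.zeroLocus ℂ I \ MvPolynomial.zeroLocus ℂ (Ideal.span {g})).Finite) I ?_
  clear I
  intro I IH g hbd
  by_cases hgI : g ∈ I
  · have hsub : MvPolynomial.zeroLocus ℂ I ⊆ MvPolynomial.zeroLocus ℂ (Ideal.span {g}) :=
      MvPolynomial.zeroLocus_anti_mono (by rwa [Ideal.span_singleton_le_iff_mem])
    rw [Set.diff_eq_empty.mpr hsub]
    exact Set.finite_empty
  by_cases hIP : I.IsPrime
  · exact (prime_finite n I hIP g hgI hbd).subset Set.diff_subset
  by_cases hItop : I = ⊤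
  · subst hItop
    rw [MvPolynomial.zeroLocus_top]
    simpa using Set.finite_empty
  -- I is not prime: split
  have hex : ∃ a b : MvPolynomial (Fin n) ℂ, a * b ∈ I ∧ a ∉ I ∧ b ∉ I := by
    by_contra hcon
    push_neg at hcon
    apply hIP
    constructor
    · exact hItop
    · intro x y hxy
      by_contra hno
      push_neg at hno
      exact hno.2 (hcon x y hxy hno.1)
  obtain ⟨a, b, hab, ha, hb⟩ := hex
  have hsplit : MvPolynomial.zeroLocus ℂ I
      = MvPolynomial.zeroLocus ℂ (I ⊔ Ideal.span {a}) ∪ MvPolynomial.zeroLocus ℂ (I ⊔ Ideal.span {b}) := by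
    rw [zeroLocus_sup_span_singleton, zeroLocus_sup_span_singleton]
    ext x
    constructor
    · intro hx
      have h0 : MvPolynomial.eval x a * MvPolynomial.eval x b = 0 := by
        have := hx _ hab
        rwa [_root_.map_mul] at this
      rcases mul_eq_zero.mp h0 with h | h
      · exact Or.inl ⟨hx, h⟩
      · exact Or.inr ⟨hx, h⟩
    · rintro (⟨hx, -⟩ | ⟨hx, -⟩) <;> exact hx
  have hgtA : I ⊔ Ideal.span {a} > I := by
    rw [gt_iff_lt, left_lt_sup, Ideal.span_singleton_le_iff_mem]
    exact ha
  have hgtB : I ⊔ Ideal.span {b} > I := by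
    rw [gt_iff_lt, left_lt_sup, Ideal.span_singleton_le_iff_mem]
    exact hb
  have hsubA : MvPolynomial.zeroLocus ℂ (I ⊔ Ideal.span {a}) \ MvPolynomial.zeroLocus ℂ (Ideal.span {g})
      ⊆ MvPolynomial.zeroLocus ℂ I \ MvPolynomial.zeroLocus ℂ (Ideal.span {g}) :=
    Set.diff_subset_diff_left (MvPolynomial.zeroLocus_anti_mono le_sup_left)
  have hsubB : MvPolynomial.zeroLocus ℂ (I ⊔ Ideal.span {b}) \ MvPolynomial.zeroLocus ℂ (Ideal.span {g})
      ⊆ MvPolynomial.zeroLocus ℂ I \ MvPolynomial.zeroLocus ℂ (Ideal.span {g}) :=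
    Set.diff_subset_diff_left (MvPolynomial.zeroLocus_anti_mono le_sup_left)
  rw [hsplit, Set.union_diff_distrib]
  exact Set.Finite.union
    (IH _ hgtA g (hbd.subset (hsplit ▸ hsubA)))
    (IH _ hgtB g (hbd.subset (hsplit ▸ hsubB)))

end ZarAux6

/-- A subset of `ℂ^n` is Zariski closed if it is the common zero set of a
(possibly infinite) family of polynomials with complex coefficients. -/
def ZariskiClosed {n : ℕ} (S : Set (Fin n → ℂ)) : Prop :=
  ∃ F : Set (MvPolynomial (Fin n) ℂ),
    S = {x : Fin n → ℂ | ∀ f ∈ F, MvPolynomial.eval x f = 0}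

/-- If a Zariski locally closed subset `C \ D` of `ℂ^n` is bounded with respect to
the euclidean norm, then it is finite. -/
theorem finite_of_bounded_locallyClosed (n : ℕ) (hn : 1 ≤ n)
    (C D : Set (Fin n → ℂ)) (hC : ZariskiClosed C) (hD : ZariskiClosed D)
    (hbd : Bornology.IsBounded (C \ D)) : (C \ D).Finite := by
  classical
  obtain ⟨F, hF⟩ := hC
  obtain ⟨G, hG⟩ := hD
  have hCz : C = MvPolynomial.zeroLocus ℂ (Ideal.span F) := by
    rw [MvPolynomial.zeroLocus_span]; exact hF
  have hGfg : (Ideal.span G).FG := IsNoetherian.noetherian _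
  obtain ⟨s, hs⟩ := hGfg
  have hDz : D = {x : Fin n → ℂ | ∀ g ∈ (s : Set (MvPolynomial (Fin n) ℂ)),
      MvPolynomial.eval x g = 0} := by
    have key := congrArg (MvPolynomial.zeroLocus ℂ) hs
    rw [MvPolynomial.zeroLocus_span, MvPolynomial.zeroLocus_span] at key
    rw [hG]; simpa using key.symm
  have hsplit : C \ D = ⋃ g ∈ s, (MvPolynomial.zeroLocus ℂ (Ideal.span F)
      \ MvPolynomial.zeroLocus ℂ (Ideal.span {g})) := by
    ext x
    constructor
    · rintro ⟨hxC, hxD⟩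
      rw [hDz] at hxD
      simp only [Set.mem_setOf_eq, not_forall] at hxD
      obtain ⟨g, hgs, hgne⟩ := hxD
      have hgs' : g ∈ s := hgs
      refine Set.mem_biUnion hgs' ⟨?_, ?_⟩
      · rw [← hCz]; exact hxC
      · intro hxg
        rw [zeroLocus_span_singleton] at hxg
        exact hgne hxg
    · intro hx
      simp only [Set.mem_iUnion] at hx
      obtain ⟨g, hgs, hx1, hx2⟩ := hx
      constructor
      · rw [hCz]; exact hx1
      · rw [hDz]
        intro hall
        apply hx2
        rw [zeroLocus_span_singleton]
        exact hall g hgs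
  rw [hsplit]
  refine Set.Finite.biUnion s.finite_toSet (fun g hgs => ?_)
  apply ideal_case n (Ideal.span F) g
  refine hbd.subset ?_
  rw [hsplit]
  intro x hx
  exact Set.mem_biUnion hgs hx
end

section
/- Let W ⊆ ℂ^N be a Zariski closed cone and let σ : ℂ^N → ℂ^m be a ℂ-linear map whose restriction to W is injective. Then σ(W) is a Zariski closed cone of ℂ^m, and moreover for every Zariski closed subset C of ℂ^N the image σ(W ∩ C) is Zariski closed in ℂ^m. Consequently σ restricts to a bijective closed map from W onto σ(W), hence a homeomorphism of W onto σ(W) for the Zariski topologies. -/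
/-- A subset of a complex vector space is a cone if it is closed under
multiplication by all complex scalars. -/
def IsCone {n : ℕ} (S : Set (Fin n → ℂ)) : Prop :=
  ∀ c : ℂ, ∀ w ∈ S, c • w ∈ S

open MvPolynomial

namespace ZarAux

variable {N m : ℕ}

/-- The linear polynomials representing a linear map. -/
noncomputable def lin (σ : (Fin N → ℂ) →ₗ[ℂ] (Fin m → ℂ)) (j : Fin m) :
    MvPolynomial (Fin N) ℂ :=
  ∑ i, MvPolynomial.C (σ (Pi.single i 1) j) * MvPolynomial.X i

lemma eval_lin (σ : (Fin N → ℂ) →ₗ[ℂ] (Fin m → ℂ)) (x : Fin N → ℂ) (j : Fin m) :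
    eval x (lin σ j) = σ x j := by
  have hx : x = ∑ i, x i • (Pi.single i 1 : Fin N → ℂ) := by
    funext k
    simp [Finset.sum_apply, Pi.single_apply]
  conv_rhs => rw [hx]
  rw [map_sum]
  simp [lin, Finset.sum_apply, mul_comm]

lemma lin_isHomogeneous (σ : (Fin N → ℂ) →ₗ[ℂ] (Fin m → ℂ)) (j : Fin m) :
    (lin σ j).IsHomogeneous 1 := by
  apply MvPolynomial.IsHomogeneous.sum
  intro i _
  simpa using (isHomogeneous_C (Fin N) (σ (Pi.single i 1) j)).mul (isHomogeneous_X ℂ i)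

lemma eval_aeval_lin (σ : (Fin N → ℂ) →ₗ[ℂ] (Fin m → ℂ)) (x : Fin N → ℂ)
    (g : MvPolynomial (Fin m) ℂ) :
    eval x (MvPolynomial.aeval (lin σ) g) = eval (σ x) g := by
  rw [MvPolynomial.aeval_def, MvPolynomial.algebraMap_eq, eval_eval₂]
  have h1 : (eval x).comp (C : ℂ →+* MvPolynomial (Fin N) ℂ) = RingHom.id ℂ :=
    RingHom.ext fun c => eval_C c
  rw [h1, eval₂_id]
  have h2 : (fun s => eval x (lin σ s)) = σ x := by simp only [eval_lin]
  rw [h2]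

lemma eval_homog_smul {φ : MvPolynomial (Fin N) ℂ} {n : ℕ} (h : φ.IsHomogeneous n)
    (t : ℂ) (w : Fin N → ℂ) :
    eval (t • w) φ = t ^ n * eval w φ := by
  rw [eval_eq, eval_eq, Finset.mul_sum]
  apply Finset.sum_congr rfl
  intro d hd
  have hdeg : ∑ i ∈ d.support, d i = n := by
    have := h (MvPolynomial.mem_support_iff.mp hd)
    rw [← this, Finsupp.weight_apply]
    simp [Finsupp.sum]
  have : ∏ i ∈ d.support, (t • w) i ^ d i
      = t ^ n * ∏ i ∈ d.support, w i ^ d i := by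
    rw [← hdeg, ← Finset.prod_pow_eq_pow_sum, ← Finset.prod_mul_distrib]
    apply Finset.prod_congr rfl
    intro i _
    simp [mul_pow]
  rw [this]; ring

lemma cone_vanishing_homog {W : Set (Fin N → ℂ)} (hcone : IsCone W)
    {f : MvPolynomial (Fin N) ℂ} (hf : f ∈ vanishingIdeal ℂ W) (n : ℕ) :
    homogeneousComponent n f ∈ vanishingIdeal ℂ W := by
  rw [mem_vanishingIdeal_iff]
  intro w hw
  by_cases hn : f.totalDegree < n
  · simp [homogeneousComponent_eq_zero _ _ hn]
  push_neg at hn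
  set q : Polynomial ℂ := ∑ e ∈ Finset.range (f.totalDegree + 1),
    Polynomial.C (eval w (homogeneousComponent e f)) * Polynomial.X ^ e with hqdef
  have hq : ∀ t : ℂ, q.eval t = 0 := by
    intro t
    have h1 : eval (t • w) f = 0 := hf _ (hcone t w hw)
    have h2 : q.eval t = eval (t • w) f := by
      conv_rhs => rw [← sum_homogeneousComponent f]
      rw [map_sum]
      simp only [hqdef, Polynomial.eval_finset_sum, Polynomial.eval_mul, Polynomial.eval_C,
        Polynomial.eval_pow, Polynomial.eval_X]
      exact Finset.sum_congr rfl fun e _ => by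
        rw [eval_homog_smul (homogeneousComponent_isHomogeneous e f)]; ring
    rw [h2, h1]
  have hq0 : q = 0 := Polynomial.zero_of_eval_zero q hq
  have hc : q.coeff n = eval w (homogeneousComponent n f) := by
    rw [hqdef, Polynomial.finset_sum_coeff]
    simp only [Polynomial.coeff_C_mul, Polynomial.coeff_X_pow, mul_ite, mul_one, mul_zero]
    rw [Finset.sum_ite_eq (Finset.range (f.totalDegree + 1)) n
      (fun e => eval w (homogeneousComponent e f))]
    simp [Nat.lt_succ_of_le hn]
  rw [hq0] at hc
  simpa using hc.symm

lemma homogComponent_mul_lin {g ℓ : MvPolynomial (Fin N) ℂ} (hℓ : ℓ.IsHomogeneous 1)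
    {d : ℕ} (hd : 1 ≤ d) :
    homogeneousComponent d (g * ℓ) = homogeneousComponent (d - 1) g * ℓ := by
  conv_lhs => rw [← sum_homogeneousComponent g]
  rw [Finset.sum_mul, map_sum]
  have key : ∀ e, homogeneousComponent d (homogeneousComponent e g * ℓ)
      = if e = d - 1 then homogeneousComponent e g * ℓ else 0 := by
    intro e
    have hmem : homogeneousComponent e g * ℓ ∈ homogeneousSubmodule (Fin N) ℂ (e + 1) := by
      rw [mem_homogeneousSubmodule]
      exact (homogeneousComponent_isHomogeneous e g).mul hℓ
    rw [homogeneousComponent_of_mem hmem]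
    congr 1
    simp only [eq_iff_iff]
    omega
  simp_rw [key]
  rw [Finset.sum_ite_eq' (Finset.range (g.totalDegree + 1)) (d - 1)
    (fun e => homogeneousComponent e g * ℓ)]
  by_cases hrange : d - 1 ∈ Finset.range (g.totalDegree + 1)
  · rw [if_pos hrange]
  · rw [if_neg hrange]
    rw [Finset.mem_range, Nat.lt_succ_iff, not_le] at hrange
    rw [homogeneousComponent_eq_zero _ _ hrange, zero_mul]

lemma lin_finite (ℓ : Fin m → MvPolynomial (Fin N) ℂ)
    (J : Ideal (MvPolynomial (Fin N) ℂ)) (d : ℕ) (hd : 1 ≤ d)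
    (hX : ∀ i : Fin N, ∃ h : Fin m → MvPolynomial (Fin N) ℂ,
      (∀ j, (h j).IsHomogeneous (d - 1)) ∧ MvPolynomial.X i ^ d - ∑ j, h j * ℓ j ∈ J) :
    ((Ideal.Quotient.mk J).comp
      ((MvPolynomial.aeval ℓ : MvPolynomial (Fin m) ℂ →ₐ[ℂ] MvPolynomial (Fin N) ℂ) :
        MvPolynomial (Fin m) ℂ →+* MvPolynomial (Fin N) ℂ)).Finite := by
  classical
  letI : Algebra (MvPolynomial (Fin m) ℂ) (MvPolynomial (Fin N) ℂ ⧸ J) :=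
    ((Ideal.Quotient.mk J).comp
      ((MvPolynomial.aeval ℓ : MvPolynomial (Fin m) ℂ →ₐ[ℂ] MvPolynomial (Fin N) ℂ) :
        MvPolynomial (Fin m) ℂ →+* MvPolynomial (Fin N) ℂ)).toAlgebra
  letI : Module (MvPolynomial (Fin m) ℂ) (MvPolynomial (Fin N) ℂ ⧸ J) := Algebra.toModule
  have hsmul : ∀ (b : MvPolynomial (Fin m) ℂ) (p : MvPolynomial (Fin N) ℂ),
      b • (Ideal.Quotient.mk J p) = Ideal.Quotient.mk J (MvPolynomial.aeval ℓ b * p) := by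
    intro b p
    rw [Algebra.smul_def, RingHom.algebraMap_toAlgebra, RingHom.comp_apply, ← map_mul]
    rfl
  let G : Finset (MvPolynomial (Fin N) ℂ ⧸ J) :=
    (Fintype.piFinset fun _ : Fin N => Finset.range d).image
      (fun v => Ideal.Quotient.mk J (monomial (Finsupp.equivFunOnFinite.symm v) 1))
  have small : ∀ (s : Fin N →₀ ℕ) (c : ℂ), (∀ i, s i < d) →
      Ideal.Quotient.mk J (monomial s c) ∈
        Submodule.span (MvPolynomial (Fin m) ℂ) (G : Set (MvPolynomial (Fin N) ℂ ⧸ J)) := by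
    intro s c hs
    have h1 : Ideal.Quotient.mk J (monomial s 1) ∈ G := by
      apply Finset.mem_image.mpr
      refine ⟨fun i => s i, ?_, ?_⟩
      · rw [Fintype.mem_piFinset]
        intro i
        exact Finset.mem_range.mpr (hs i)
      · exact congrArg _ (congrArg (fun t => monomial t (1:ℂ))
          (Finsupp.equivFunOnFinite.symm_apply_apply s))
    have h2 : Ideal.Quotient.mk J (monomial s c)
        = (MvPolynomial.C c : MvPolynomial (Fin m) ℂ) • Ideal.Quotient.mk J (monomial s 1) := by
      rw [hsmul]
      congr 1
      rw [MvPolynomial.aeval_C, MvPolynomial.algebraMap_eq, C_mul_monomial, mul_one]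
    rw [h2]
    exact Submodule.smul_mem _ _ (Submodule.subset_span h1)
  have gen : ∀ (n : ℕ) (p : MvPolynomial (Fin N) ℂ),
      (∀ (s : Fin N →₀ ℕ) (c : ℂ), Finsupp.degree s ≤ n →
        Ideal.Quotient.mk J (monomial s c) ∈
          Submodule.span (MvPolynomial (Fin m) ℂ) (G : Set (MvPolynomial (Fin N) ℂ ⧸ J))) →
      p.totalDegree ≤ n → Ideal.Quotient.mk J p ∈
        Submodule.span (MvPolynomial (Fin m) ℂ) (G : Set (MvPolynomial (Fin N) ℂ ⧸ J)) := by
    intro n p hmono hp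
    rw [← support_sum_monomial_coeff p, map_sum]
    apply Submodule.sum_mem
    intro s hs
    exact hmono s _ (le_trans (le_totalDegree hs) hp)
  have main : ∀ (n : ℕ) (p : MvPolynomial (Fin N) ℂ), p.totalDegree ≤ n →
      Ideal.Quotient.mk J p ∈
        Submodule.span (MvPolynomial (Fin m) ℂ) (G : Set (MvPolynomial (Fin N) ℂ ⧸ J)) := by
    intro n
    induction n with
    | zero =>
      intro p hp
      refine gen 0 p (fun s c hdeg => small s c fun i => ?_) hp
      have := Finsupp.le_degree i s
      omega
    | succ n ih =>
      intro p hp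
      refine gen (n + 1) p (fun s c hdeg => ?_) hp
      by_cases hbig : ∃ i, d ≤ s i
      · obtain ⟨i, hi⟩ := hbig
        obtain ⟨h, hhom, hmem⟩ := hX i
        have hadd : Finsupp.single i d + (s - Finsupp.single i d) = s :=
          add_tsub_cancel_of_le (Finsupp.single_le_iff.mpr hi)
        have hdegadd : Finsupp.degree (Finsupp.single i d)
            + Finsupp.degree (s - Finsupp.single i d) = Finsupp.degree s := by
          conv_rhs => rw [← hadd]
          simp only [Finsupp.degree_eq_weight_one]
          exact (map_add _ _ _).symm
        have hdegsingle : Finsupp.degree (Finsupp.single i d) = d := by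
          have hdne : d ≠ 0 := by omega
          rw [Finsupp.degree_apply, Finsupp.support_single_ne_zero i hdne, Finset.sum_singleton,
            Finsupp.single_eq_same]
        have hconcrete : (monomial s c : MvPolynomial (Fin N) ℂ)
            = MvPolynomial.X i ^ d * monomial (s - Finsupp.single i d) c := by
          rw [X_pow_eq_monomial, monomial_mul, one_mul, hadd]
        have h1 : Ideal.Quotient.mk J (monomial s c)
            = Ideal.Quotient.mk J ((∑ j, h j * ℓ j) * monomial (s - Finsupp.single i d) c) := by
          rw [hconcrete, ← sub_eq_zero, ← map_sub, ← sub_mul]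
          exact Ideal.Quotient.eq_zero_iff_mem.mpr (J.mul_mem_right _ hmem)
        rw [h1, Finset.sum_mul, map_sum]
        apply Submodule.sum_mem
        intro j _
        have hb : (h j * monomial (s - Finsupp.single i d) c).totalDegree ≤ n := by
          have e1 : (h j * monomial (s - Finsupp.single i d) c).totalDegree
              ≤ (h j).totalDegree + (monomial (s - Finsupp.single i d) c).totalDegree :=
            totalDegree_mul _ _
          have e2 : (h j).totalDegree ≤ d - 1 := (hhom j).totalDegree_le
          have e3 : (monomial (s - Finsupp.single i d) c).totalDegree
              ≤ Finsupp.degree (s - Finsupp.single i d) := totalDegree_monomial_le _ _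
          omega
        have h3 : Ideal.Quotient.mk J (h j * ℓ j * monomial (s - Finsupp.single i d) c)
            = (MvPolynomial.X j : MvPolynomial (Fin m) ℂ) •
              Ideal.Quotient.mk J (h j * monomial (s - Finsupp.single i d) c) := by
          rw [hsmul, MvPolynomial.aeval_X]
          exact congrArg _ (by ring)
        rw [h3]
        exact Submodule.smul_mem _ _ (ih _ hb)
      · push_neg at hbig
        exact small s c hbig
  have fin : Module.Finite (MvPolynomial (Fin m) ℂ) (MvPolynomial (Fin N) ℂ ⧸ J) := by
    constructor
    refine ⟨G, ?_⟩
    rw [eq_top_iff]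
    intro x _
    obtain ⟨p, rfl⟩ := Ideal.Quotient.mk_surjective x
    exact main _ p le_rfl
  exact fin

lemma closed_zeroLocus {n : ℕ} {S : Set (Fin n → ℂ)} (hS : ZariskiClosed S) :
    MvPolynomial.zeroLocus ℂ (MvPolynomial.vanishingIdeal ℂ S) = S := by
  obtain ⟨F, rfl⟩ := hS
  have h1 : {x : Fin n → ℂ | ∀ f ∈ F, eval x f = 0} = zeroLocus ℂ (Ideal.span F) :=
    (zeroLocus_span F).symm
  rw [h1]
  apply le_antisymm
  · exact zeroLocus_anti_mono (le_vanishingIdeal_zeroLocus _)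
  · exact zeroLocus_vanishingIdeal_le _

lemma zariskiClosed_inter {n : ℕ} {S T : Set (Fin n → ℂ)}
    (hS : ZariskiClosed S) (hT : ZariskiClosed T) : ZariskiClosed (S ∩ T) := by
  obtain ⟨F, rfl⟩ := hS
  obtain ⟨G, rfl⟩ := hT
  refine ⟨F ∪ G, ?_⟩
  ext x
  simp only [Set.mem_inter_iff, Set.mem_setOf_eq, Set.mem_union]
  constructor
  · rintro ⟨h1, h2⟩ f (hf | hf)
    · exact h1 f hf
    · exact h2 f hf
  · intro h
    exact ⟨fun f hf => h f (Or.inl hf), fun f hf => h f (Or.inr hf)⟩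

end ZarAux

/-- Let `W ⊆ ℂ^N` be a Zariski closed cone and `σ : ℂ^N → ℂ^m` a `ℂ`-linear map
injective on `W`. Then `σ(W)` is a Zariski closed cone, and for every Zariski
closed `C ⊆ ℂ^N` the image `σ(W ∩ C)` is Zariski closed; hence `σ` restricts to
a bijective closed map from `W` onto `σ(W)`, i.e. a homeomorphism for the
Zariski topologies. -/
theorem linear_injOn_cone_image_zariskiClosed (N m : ℕ)
    (W : Set (Fin N → ℂ)) (hW : ZariskiClosed W) (hcone : IsCone W)
    (σ : (Fin N → ℂ) →ₗ[ℂ] (Fin m → ℂ)) (hinj : Set.InjOn σ W) :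
    ZariskiClosed (⇑σ '' W) ∧ IsCone (⇑σ '' W) ∧
      ∀ C : Set (Fin N → ℂ), ZariskiClosed C → ZariskiClosed (⇑σ '' (W ∩ C)) := by
  classical
  by_cases hWemp : W = ∅
  · subst hWemp
    refine ⟨⟨{1}, ?_⟩, ?_, ?_⟩
    · ext x; simp
    · rintro c w ⟨_, ⟨⟩, _⟩
    · intro C _
      refine ⟨{1}, ?_⟩
      ext x; simp
  obtain ⟨w0, hw0⟩ := Set.nonempty_iff_ne_empty.mpr hWemp
  have h0W : (0 : Fin N → ℂ) ∈ W := by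
    have := hcone 0 w0 hw0
    simpa using this
  set ℓ : Fin m → MvPolynomial (Fin N) ℂ := ZarAux.lin σ with hℓdef
  have hℓ : ∀ j, (ℓ j).IsHomogeneous 1 := ZarAux.lin_isHomogeneous σ
  have hWz : MvPolynomial.zeroLocus ℂ (vanishingIdeal ℂ W) = W := ZarAux.closed_zeroLocus hW
  have key : ∀ C : Set (Fin N → ℂ), ZariskiClosed C → ZariskiClosed (⇑σ '' (W ∩ C)) := by
    intro C hC
    have hVclosed : ZariskiClosed (W ∩ C) := ZarAux.zariskiClosed_inter hW hC
    have hVz : MvPolynomial.zeroLocus ℂ (vanishingIdeal ℂ (W ∩ C)) = W ∩ C :=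
      ZarAux.closed_zeroLocus hVclosed
    set I' : Ideal (MvPolynomial (Fin N) ℂ) := vanishingIdeal ℂ (W ∩ C) with hI'def
    have hIle : vanishingIdeal ℂ W ≤ I' := vanishingIdeal_anti_mono Set.inter_subset_left
    set L : Ideal (MvPolynomial (Fin N) ℂ) := Ideal.span (Set.range ℓ) with hLdef
    -- radical membership
    have hrad : ∀ i : Fin N, ∃ k : ℕ, MvPolynomial.X i ^ k ∈ vanishingIdeal ℂ W ⊔ L := by
      intro i
      have hzl : MvPolynomial.zeroLocus ℂ (vanishingIdeal ℂ W ⊔ L) ⊆ {0} := by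
        intro x hx
        have hxW : x ∈ W := by
          rw [← hWz]
          exact fun p hp => hx p (Ideal.mem_sup_left hp)
        have hσx : σ x = 0 := by
          funext j
          have := hx (ℓ j) (Ideal.mem_sup_right (Ideal.subset_span ⟨j, rfl⟩))
          rw [hℓdef] at this
          change eval x _ = 0 at this
          rw [ZarAux.eval_lin σ x j] at this
          simpa using this
        exact hinj hxW h0W (by rw [hσx, map_zero])
      have hXi : MvPolynomial.X i ∈ (vanishingIdeal ℂ W ⊔ L).radical := by
        rw [← vanishingIdeal_zeroLocus_eq_radical (K := ℂ)]
        intro x hx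
        have hx0 : x = 0 := hzl hx
        rw [hx0]
        simp
      exact Ideal.mem_radical_iff.mp hXi
    choose k hk using hrad
    set K : ℕ := (Finset.univ.sup k) + 1 with hKdef
    have hK1 : 1 ≤ K := by omega
    have hXK : ∀ i : Fin N, MvPolynomial.X i ^ K ∈ vanishingIdeal ℂ W ⊔ L := by
      intro i
      have hki : k i ≤ Finset.univ.sup k := Finset.le_sup (Finset.mem_univ i)
      have hsplit : K = (K - k i) + k i := by omega
      rw [hsplit, pow_add]
      exact Ideal.mul_mem_left _ _ (hk i)
    have hdecomp : ∀ i : Fin N, ∃ h : Fin m → MvPolynomial (Fin N) ℂ,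
        (∀ j, (h j).IsHomogeneous (K - 1)) ∧
        MvPolynomial.X i ^ K - ∑ j, h j * ℓ j ∈ I' := by
      intro i
      obtain ⟨f, hf, g, hg, hfg⟩ := Submodule.mem_sup.mp (hXK i)
      rw [hLdef] at hg
      obtain ⟨cf, hcf⟩ := Ideal.mem_span_range_iff_exists_fun.mp hg
      refine ⟨fun j => homogeneousComponent (K - 1) (cf j),
        fun j => homogeneousComponent_isHomogeneous _ _, ?_⟩
      have hXhom : (MvPolynomial.X i ^ K : MvPolynomial (Fin N) ℂ).IsHomogeneous K := by
        simpa using (isHomogeneous_X ℂ i).pow K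
      have hcomp : (MvPolynomial.X i ^ K : MvPolynomial (Fin N) ℂ)
          = homogeneousComponent K (MvPolynomial.X i ^ K) := by
        rw [homogeneousComponent_of_mem hXhom, if_pos rfl]
      have hed : (MvPolynomial.X i ^ K : MvPolynomial (Fin N) ℂ)
          = homogeneousComponent K f + ∑ j, homogeneousComponent (K - 1) (cf j) * ℓ j := by
        conv_lhs => rw [hcomp]
        have : (MvPolynomial.X i ^ K : MvPolynomial (Fin N) ℂ) = f + ∑ j, cf j * ℓ j := by
          rw [hcf, hfg]
        rw [this, map_add, map_sum]
        congr 1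
        exact Finset.sum_congr rfl fun j _ => ZarAux.homogComponent_mul_lin (hℓ j) hK1
      have : MvPolynomial.X i ^ K - ∑ j, homogeneousComponent (K - 1) (cf j) * ℓ j
          = homogeneousComponent K f := by
        rw [hed]; ring
      rw [this]
      exact hIle (ZarAux.cone_vanishing_homog hcone hf K)
    -- integrality
    have hfin := ZarAux.lin_finite ℓ I' K hK1 hdecomp
    letI : Algebra (MvPolynomial (Fin m) ℂ) (MvPolynomial (Fin N) ℂ ⧸ I') :=
      ((Ideal.Quotient.mk I').comp
        ((MvPolynomial.aeval ℓ : MvPolynomial (Fin m) ℂ →ₐ[ℂ] MvPolynomial (Fin N) ℂ) :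
          MvPolynomial (Fin m) ℂ →+* MvPolynomial (Fin N) ℂ)).toAlgebra
    letI : Module (MvPolynomial (Fin m) ℂ) (MvPolynomial (Fin N) ℂ ⧸ I') := Algebra.toModule
    haveI hMF : Module.Finite (MvPolynomial (Fin m) ℂ) (MvPolynomial (Fin N) ℂ ⧸ I') := hfin
    haveI hInt : Algebra.IsIntegral (MvPolynomial (Fin m) ℂ) (MvPolynomial (Fin N) ℂ ⧸ I') :=
      Algebra.IsIntegral.of_finite _ _
    set Ψ : MvPolynomial (Fin m) ℂ →+* MvPolynomial (Fin N) ℂ :=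
      ((MvPolynomial.aeval ℓ : MvPolynomial (Fin m) ℂ →ₐ[ℂ] MvPolynomial (Fin N) ℂ) :
        MvPolynomial (Fin m) ℂ →+* MvPolynomial (Fin N) ℂ) with hΨdef
    set J' : Ideal (MvPolynomial (Fin m) ℂ) := Ideal.comap Ψ I' with hJ'def
    refine ⟨(J' : Set (MvPolynomial (Fin m) ℂ)), ?_⟩
    have hEV : ∀ (x : Fin N → ℂ) (g : MvPolynomial (Fin m) ℂ),
        eval x (Ψ g) = eval (σ x) g := by
      intro x g
      rw [hΨdef]
      exact ZarAux.eval_aeval_lin σ x g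
    apply le_antisymm
    · rintro y ⟨x, hx, rfl⟩ g hg
      have hΨg : Ψ g ∈ I' := hg
      rw [← hEV x g]
      exact hΨg x hx
    · intro y hy
      have hy' : ∀ g ∈ J', eval y g = 0 := hy
      have hker : RingHom.ker (algebraMap (MvPolynomial (Fin m) ℂ)
          (MvPolynomial (Fin N) ℂ ⧸ I')) ≤ vanishingIdeal ℂ {y} := by
        rw [RingHom.algebraMap_toAlgebra]
        intro g hg
        rw [RingHom.mem_ker, RingHom.comp_apply, Ideal.Quotient.eq_zero_iff_mem] at hg
        rw [mem_vanishingIdeal_singleton_iff]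
        exact hy' g hg
      obtain ⟨Q, hQmax, hQcomap⟩ :=
        Ideal.exists_ideal_over_maximal_of_isIntegral (vanishingIdeal ℂ {y}) hker
      haveI := hQmax
      have hQ'max : (Q.comap (Ideal.Quotient.mk I')).IsMaximal :=
        Ideal.comap_isMaximal_of_surjective _ Ideal.Quotient.mk_surjective
      obtain ⟨x, hx⟩ := isMaximal_iff_eq_vanishingIdeal_singleton.mp hQ'max
      have hxV : x ∈ W ∩ C := by
        rw [← hVz]
        intro p hp
        have hpQ' : p ∈ Q.comap (Ideal.Quotient.mk I') := by
          rw [Ideal.mem_comap, Ideal.Quotient.eq_zero_iff_mem.mpr hp]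
          exact Q.zero_mem
        rw [hx] at hpQ'
        exact (mem_vanishingIdeal_singleton_iff x p).mp hpQ'
      have hcomapΨ : Ideal.comap Ψ (Q.comap (Ideal.Quotient.mk I')) = vanishingIdeal ℂ {y} := by
        rw [Ideal.comap_comap, ← hQcomap, RingHom.algebraMap_toAlgebra]
      have hσxy : vanishingIdeal ℂ ({σ x} : Set (Fin m → ℂ)) = vanishingIdeal ℂ {y} := by
        rw [← hcomapΨ, hx]
        ext g
        rw [Ideal.mem_comap, mem_vanishingIdeal_singleton_iff, mem_vanishingIdeal_singleton_iff,
          aeval_eq_eval, aeval_eq_eval, hEV x g]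
      have hfin : σ x = y := by
        funext j
        have h1 : (MvPolynomial.X j - MvPolynomial.C (y j) : MvPolynomial (Fin m) ℂ)
            ∈ vanishingIdeal ℂ ({y} : Set (Fin m → ℂ)) := by
          rw [mem_vanishingIdeal_singleton_iff]
          simp
        rw [← hσxy, mem_vanishingIdeal_singleton_iff] at h1
        simp only [aeval_eq_eval, map_sub, eval_X, eval_C] at h1
        exact sub_eq_zero.mp h1
      exact ⟨x, hxV, hfin⟩
  refine ⟨?_, ?_, key⟩
  · have h1 : ZariskiClosed (Set.univ : Set (Fin N → ℂ)) := ⟨∅, by ext x; simp⟩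
    have := key Set.univ h1
    rwa [Set.inter_univ] at this
  · rintro c y ⟨w, hw, rfl⟩
    exact ⟨c • w, hcone c w hw, map_smul σ c w⟩
end

section
/- Let d ≥ 1 and let m be a natural number. Define ω_d : ℂ → ℂ^{d+1} by ω_d(u) := ((u^d − 1)u^j)_{j=0,…,d}. Suppose there are polynomial maps θ : ℂ → ℂ^m and σ : ℂ^m → ℂ^{d+1} such that σ ∘ θ = ω_d and such that σ is injective on the range of θ. Then m ≥ d. -/
open scoped BigOperators

/-- A polynomial map `ℂ → ℂ^b`: each coordinate is given by evaluating a
univariate polynomial with complex coefficients. -/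
def IsPolyMap1 {b : ℕ} (f : ℂ → (Fin b → ℂ)) : Prop :=
  ∃ p : Fin b → Polynomial ℂ, ∀ (u : ℂ) (i : Fin b), f u i = (p i).eval u

/-- A polynomial map `ℂ^a → ℂ^b`: each coordinate is given by evaluating a
polynomial in `a` variables with complex coefficients. -/
def IsPolyMap {a b : ℕ} (f : (Fin a → ℂ) → (Fin b → ℂ)) : Prop :=
  ∃ p : Fin b → MvPolynomial (Fin a) ℂ,
    ∀ (x : Fin a → ℂ) (i : Fin b), f x i = MvPolynomial.eval x (p i)

open Polynomial in
/-- First-order Taylor expansion of a multivariate polynomial along the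
substitution `xᵢ ↦ zᵢ + g * qᵢ`, modulo `g²`: the linear term is an
(abstract) `ℂ`-linear combination of the `qᵢ`. -/
lemma taylor_aux {m : ℕ} (z : Fin m → ℂ) (g : ℂ[X]) (q : Fin m → ℂ[X])
    (P : MvPolynomial (Fin m) ℂ) :
    ∃ S ∈ Submodule.span ℂ (Set.range q), ∃ r : ℂ[X],
      MvPolynomial.aeval (fun i => Polynomial.C (z i) + g * q i) P
        = Polynomial.C (MvPolynomial.eval z P) + g * S + g ^ 2 * r := by
  induction P using MvPolynomial.induction_on with
  | C a =>
      refine ⟨0, Submodule.zero_mem _, 0, ?_⟩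
      simp [MvPolynomial.algebraMap_eq]
  | add p1 p2 h1 h2 =>
      obtain ⟨S1, hS1, r1, e1⟩ := h1
      obtain ⟨S2, hS2, r2, e2⟩ := h2
      refine ⟨S1 + S2, Submodule.add_mem _ hS1 hS2, r1 + r2, ?_⟩
      rw [map_add, e1, e2]
      simp only [map_add]
      ring
  | mul_X p i h =>
      obtain ⟨S, hS, r, e⟩ := h
      refine ⟨(z i) • S + (MvPolynomial.eval z p) • (q i),
        Submodule.add_mem _ (Submodule.smul_mem _ _ hS)
          (Submodule.smul_mem _ _ (Submodule.subset_span ⟨i, rfl⟩)),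
        S * q i + r * Polynomial.C (z i) + g * (r * q i), ?_⟩
      rw [map_mul, e, MvPolynomial.aeval_X, map_mul, MvPolynomial.eval_X,
        smul_eq_C_mul, smul_eq_C_mul, map_mul]
      ring

open Polynomial in
private lemma mk_smul' {g : ℂ[X]} (c : ℂ) (x : ℂ[X]) :
    AdjoinRoot.mk g (c • x) = c • AdjoinRoot.mk g x := by
  rw [smul_eq_C_mul, map_mul, Algebra.smul_def, AdjoinRoot.algebraMap_eq]
  rfl

/-- Let `d ≥ 1` and `ω_d : ℂ → ℂ^{d+1}`, `ω_d(u) = ((u^d−1)u^j)_{j=0..d}`.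
If there are polynomial maps `θ : ℂ → ℂ^m` and `σ : ℂ^m → ℂ^{d+1}` with
`σ ∘ θ = ω_d` and `σ` injective on the range of `θ`, then `m ≥ d`. -/
theorem size_lower_bound_unambiguous_encoding (d m : ℕ) (hd : 1 ≤ d)
    (θ : ℂ → (Fin m → ℂ)) (σ : (Fin m → ℂ) → (Fin (d + 1) → ℂ))
    (hθ : IsPolyMap1 θ) (hσ : IsPolyMap σ)
    (hcomp : ∀ u : ℂ, σ (θ u) = fun j : Fin (d + 1) => (u ^ d - 1) * u ^ (j : ℕ))
    (hinj : Set.InjOn σ (Set.range θ)) :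
    d ≤ m := by
  classical
  open Polynomial in
  obtain ⟨p, hp⟩ := hθ
  obtain ⟨P, hP⟩ := hσ
  have hdne : d ≠ 0 := by omega
  set g : ℂ[X] := X ^ d - 1 with hgdef
  have hg1 : g = X ^ d - C 1 := by rw [hgdef, map_one]
  have hgmonic : g.Monic := by rw [hg1]; exact monic_X_pow_sub_C _ hdne
  have hgdeg : g.natDegree = d := by rw [hg1]; exact natDegree_X_pow_sub_C
  have hζ := Complex.isPrimitiveRoot_exp d hdne
  set z := θ 1 with hz
  -- all d-th roots of unity have the same image under θ
  have hroot : ∀ ζ : ℂ, ζ ^ d = 1 → θ ζ = z := by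
    intro ζ hζd
    apply hinj (Set.mem_range_self ζ) (Set.mem_range_self 1)
    rw [hcomp, hcomp]
    funext j
    simp [hζd]
  -- σ z = 0
  have hσz : ∀ j, MvPolynomial.eval z (P j) = 0 := by
    intro j
    have h1 := congrFun (hcomp 1) j
    rw [hP] at h1
    rw [hz]
    simpa using h1
  -- divisibility : p i = z i + g * q i
  have hdvd : ∀ i, ∃ q : ℂ[X], p i = C (z i) + g * q := by
    intro i
    have hmod : (p i - C (z i)) %ₘ g = 0 := by
      apply eq_zero_of_natDegree_lt_card_of_eval_eq_zero' _ (nthRootsFinset d (1 : ℂ))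
      · intro ζ hζ'
        have hζd : ζ ^ d = 1 := (mem_nthRootsFinset (by omega) 1).mp hζ'
        have hθζ : θ ζ i = z i := by rw [hroot ζ hζd]
        have : (p i - C (z i)).eval ζ = 0 := by
          simp [eval_sub, ← hp ζ i, hθζ]
        have hdm := modByMonic_add_div (p i - C (z i)) g
        have : ((p i - C (z i)) %ₘ g).eval ζ = 0 := by
          have hgz : g.eval ζ = 0 := by simp [hgdef, hζd]
          have := congrArg (Polynomial.eval ζ) hdm
          simp only [eval_add, eval_mul, hgz, zero_mul, add_zero] at this
          rw [this]
          simp [eval_sub, ← hp ζ i, hθζ]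
        exact this
      · rw [hζ.card_nthRootsFinset]
        calc ((p i - C (z i)) %ₘ g).natDegree < g.natDegree :=
              natDegree_modByMonic_lt _ hgmonic (by
                intro h1
                exact absurd (congrArg natDegree h1) (by simp [hgdeg]; omega))
          _ = d := hgdeg
    refine ⟨(p i - C (z i)) /ₘ g, ?_⟩
    have hdm := modByMonic_add_div (p i - C (z i)) g
    rw [hmod, zero_add] at hdm
    rw [hdm]; ring
  choose q hq using hdvd
  -- the polynomial identity  aeval (z + g q) (P j) = g * X ^ j
  have hid : ∀ j : Fin (d + 1),
      MvPolynomial.aeval (fun i => C (z i) + g * q i) (P j) = g * X ^ (j : ℕ) := by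
    intro j
    apply Polynomial.funext
    intro u
    have h1 : Polynomial.aeval u (MvPolynomial.aeval (fun i => C (z i) + g * q i) (P j))
        = MvPolynomial.aeval (fun i => Polynomial.aeval u (C (z i) + g * q i)) (P j) :=
      MvPolynomial.comp_aeval_apply (f := fun i => C (z i) + g * q i) (Polynomial.aeval u) (P j)
    have h2 : (fun i => Polynomial.aeval u (C (z i) + g * q i)) = θ u := by
      funext i
      rw [coe_aeval_eq_eval, ← hq i, ← hp u i]
    have h3 : MvPolynomial.aeval (θ u) (P j) = MvPolynomial.eval (θ u) (P j) := by
      rw [MvPolynomial.aeval_eq_eval₂Hom, Algebra.algebraMap_self]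
      rfl
    have h4 : σ (θ u) j = (u ^ d - 1) * u ^ (j : ℕ) := congrFun (hcomp u) j
    rw [hP] at h4
    have : Polynomial.aeval u (MvPolynomial.aeval (fun i => C (z i) + g * q i) (P j))
        = (u ^ d - 1) * u ^ (j : ℕ) := by
      rw [h1, h2, h3, h4]
    rw [coe_aeval_eq_eval] at this
    rw [this]
    simp [hgdef]
  -- Taylor expansion and cancellation of g
  have hgne : g ≠ 0 := hgmonic.ne_zero
  have key : ∀ j : Fin (d + 1), ∃ S ∈ Submodule.span ℂ (Set.range q),
      ∃ r : ℂ[X], (X : ℂ[X]) ^ (j : ℕ) = S + g * r := by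
    intro j
    obtain ⟨S, hS, r, e⟩ := taylor_aux z g q (P j)
    rw [hid j, hσz j, map_zero, zero_add] at e
    refine ⟨S, hS, r, ?_⟩
    apply mul_left_cancel₀ hgne
    rw [e]; ring
  -- pass to AdjoinRoot g
  set A := AdjoinRoot g with hA
  set w : Fin m → A := fun i => AdjoinRoot.mk g (q i) with hw
  have hmem : ∀ j : Fin (d + 1), (AdjoinRoot.root g) ^ (j : ℕ)
      ∈ Submodule.span ℂ (Set.range w) := by
    intro j
    obtain ⟨S, hS, r, e⟩ := key j
    have hmkS : AdjoinRoot.mk g S ∈ Submodule.span ℂ (Set.range w) := by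
      rw [Submodule.mem_span_range_iff_exists_fun] at hS
      obtain ⟨c, hc⟩ := hS
      rw [Submodule.mem_span_range_iff_exists_fun]
      refine ⟨c, ?_⟩
      rw [← hc, map_sum]
      exact Finset.sum_congr rfl fun i _ => mk_smul' (c i) (q i)
    have : (AdjoinRoot.root g) ^ (j : ℕ) = AdjoinRoot.mk g S := by
      have := congrArg (AdjoinRoot.mk g) e
      rw [map_add, map_mul, AdjoinRoot.mk_self, zero_mul, add_zero, map_pow,
        AdjoinRoot.mk_X] at this
      exact this
    rw [this]
    exact hmkS
  -- linear independence of the powers of the root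
  have pb := AdjoinRoot.powerBasis hgne
  have hdim : (AdjoinRoot.powerBasis hgne).dim = d := by
    rw [AdjoinRoot.powerBasis_dim, hgdeg]
  set b : Fin d → A := fun j => (AdjoinRoot.root g) ^ (j : ℕ) with hb
  have hli : LinearIndependent ℂ b := by
    have hli0 := (AdjoinRoot.powerBasis hgne).basis.linearIndependent
    have hinj' : Function.Injective (Fin.cast hdim.symm) := Fin.cast_injective _
    have := hli0.comp _ hinj'
    convert this using 1
    funext j
    rw [hb]
    show (AdjoinRoot.root g) ^ (j : ℕ)
        = (AdjoinRoot.powerBasis hgne).basis (Fin.cast hdim.symm j)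
    rw [PowerBasis.coe_basis, AdjoinRoot.powerBasis_gen]
    rfl
    rfl
  -- conclude by dimension counting inside the span of w
  set W := Submodule.span ℂ (Set.range w) with hW
  have hbW : ∀ j : Fin d, b j ∈ W := by
    intro j
    have hj : ((⟨(j : ℕ), by omega⟩ : Fin (d + 1)) : ℕ) = (j : ℕ) := rfl
    have := hmem ⟨(j : ℕ), by omega⟩
    rwa [hj] at this
  have hfin : FiniteDimensional ℂ W :=
    FiniteDimensional.span_of_finite ℂ (Set.finite_range w)
  set b' : Fin d → W := fun j => ⟨b j, hbW j⟩ with hb'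
  have hli' : LinearIndependent ℂ b' := by
    apply LinearIndependent.of_comp W.subtype
    convert hli using 1
    rfl
  have h1 : d ≤ Module.finrank ℂ W := by
    simpa using hli'.fintype_card_le_finrank
  have h2 : Module.finrank ℂ W ≤ m := by
    have := finrank_range_le_card (R := ℂ) w
    simpa [Set.finrank, hW] using this
  omega
end

section
/- Let d ≥ 1, let m be a natural number, and let γ_1,…,γ_m ∈ ℂ. For u ∈ ℂ let F_{d,u} ∈ ℂ[Y] denote the polynomial Σ_{j=0}^{d} (u^d − 1)u^j Y^j. Suppose there exists a polynomial map σ : ℂ^m → ℂ^{d+1} such that for every u ∈ ℂ, σ(F_{d,u}(γ_1),…,F_{d,u}(γ_m)) = ((u^d − 1)u^j)_{j=0,…,d}. Then m ≥ d. -/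
open scoped BigOperators

private lemma aux_const_dvd {m : ℕ} (q : Polynomial ℂ) (v : Fin m → Polynomial ℂ)
    (hv : ∀ i, q ∣ v i) (P : MvPolynomial (Fin m) ℂ) :
    q ∣ MvPolynomial.aeval v P - Polynomial.C (MvPolynomial.constantCoeff P) := by
  induction P using MvPolynomial.induction_on with
  | C a => simp [MvPolynomial.algebraMap_eq]
  | add P Q hP hQ =>
      have h1 : MvPolynomial.aeval v (P + Q) - Polynomial.C (MvPolynomial.constantCoeff (P + Q))
          = (MvPolynomial.aeval v P - Polynomial.C (MvPolynomial.constantCoeff P))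
            + (MvPolynomial.aeval v Q - Polynomial.C (MvPolynomial.constantCoeff Q)) := by
        simp [map_add]; ring
      rw [h1]; exact dvd_add hP hQ
  | mul_X P i hP =>
      have h1 : MvPolynomial.constantCoeff (P * MvPolynomial.X i) = 0 := by
        simp
      rw [h1, map_zero, sub_zero, map_mul, MvPolynomial.aeval_X]
      exact Dvd.dvd.mul_left (hv i) _

private lemma aux_lin_dvd {m : ℕ} (q : Polynomial ℂ) (v : Fin m → Polynomial ℂ)
    (hv : ∀ i, q ∣ v i) (P : MvPolynomial (Fin m) ℂ) :
    q ^ 2 ∣ MvPolynomial.aeval v P - Polynomial.C (MvPolynomial.constantCoeff P)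
      - ∑ i, Polynomial.C (MvPolynomial.coeff (Finsupp.single i 1) P) * v i := by
  classical
  induction P using MvPolynomial.induction_on with
  | C a =>
      have h1 : ∀ i : Fin m, MvPolynomial.coeff (Finsupp.single i 1) (MvPolynomial.C a : MvPolynomial (Fin m) ℂ) = 0 := by
        intro i
        rw [MvPolynomial.coeff_C, if_neg]
        intro he
        exact one_ne_zero (Finsupp.single_eq_zero.mp he.symm)
      simp [h1, MvPolynomial.algebraMap_eq]
  | add P Q hP hQ =>
      have h1 : MvPolynomial.aeval v (P + Q) - Polynomial.C (MvPolynomial.constantCoeff (P + Q))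
          - ∑ i, Polynomial.C (MvPolynomial.coeff (Finsupp.single i 1) (P + Q)) * v i
          = (MvPolynomial.aeval v P - Polynomial.C (MvPolynomial.constantCoeff P)
              - ∑ i, Polynomial.C (MvPolynomial.coeff (Finsupp.single i 1) P) * v i)
            + (MvPolynomial.aeval v Q - Polynomial.C (MvPolynomial.constantCoeff Q)
              - ∑ i, Polynomial.C (MvPolynomial.coeff (Finsupp.single i 1) Q) * v i) := by
        simp [map_add, MvPolynomial.coeff_add, add_mul, Finset.sum_add_distrib]; ring
      rw [h1]; exact dvd_add hP hQ
  | mul_X P i hP =>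
      have hcc : MvPolynomial.constantCoeff (P * MvPolynomial.X i) = 0 := by simp
      have hsum : (∑ k, Polynomial.C (MvPolynomial.coeff (Finsupp.single k 1) (P * MvPolynomial.X i)) * v k)
          = Polynomial.C (MvPolynomial.constantCoeff P) * v i := by
        rw [Finset.sum_eq_single i]
        · rw [MvPolynomial.coeff_mul_X']
          simp [MvPolynomial.constantCoeff_eq]
        · intro k _ hk
          rw [MvPolynomial.coeff_mul_X']
          have : i ∉ (Finsupp.single k 1).support := by
            simp [Finsupp.support_single_ne_zero k one_ne_zero, Ne.symm hk]
          rw [if_neg this]; simp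
        · intro hmem; exact absurd (Finset.mem_univ i) hmem
      rw [hcc, map_zero, sub_zero, hsum, map_mul, MvPolynomial.aeval_X, ← sub_mul, sq]
      exact mul_dvd_mul (aux_const_dvd q v hv P) (hv i)

/-- Let `d ≥ 1`, `γ_1,…,γ_m ∈ ℂ` and `F_{d,u}(Y) = Σ_{j=0}^d (u^d−1)u^j Y^j`.
If there is a polynomial map `σ : ℂ^m → ℂ^{d+1}` recovering the coefficient
vector of `F_{d,u}` from its values at `γ_1,…,γ_m` for every `u ∈ ℂ`,
then `m ≥ d`. -/
theorem size_lower_bound_encoding_by_values (d m : ℕ) (hd : 1 ≤ d)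
    (γ : Fin m → ℂ) (σ : (Fin m → ℂ) → (Fin (d + 1) → ℂ)) (hσ : IsPolyMap σ)
    (h : ∀ u : ℂ,
      σ (fun i : Fin m => ∑ j ∈ Finset.range (d + 1), (u ^ d - 1) * u ^ j * γ i ^ j) =
        fun j : Fin (d + 1) => (u ^ d - 1) * u ^ (j : ℕ)) :
    d ≤ m := by
  classical
  obtain ⟨p, hp⟩ := hσ
  set q : Polynomial ℂ := Polynomial.X ^ d - 1 with hqdef
  set G : Fin m → Polynomial ℂ :=
    fun i => ∑ j ∈ Finset.range (d + 1), Polynomial.C (γ i ^ j) * Polynomial.X ^ j with hGdef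
  set V : Fin m → Polynomial ℂ := fun i => q * G i with hVdef
  have hVdvd : ∀ i, q ∣ V i := fun i => Dvd.intro _ rfl
  have hqne : q ≠ 0 := by
    intro h0
    have := congrArg (Polynomial.eval 0) h0
    simp [hqdef, zero_pow (by omega : d ≠ 0)] at this
  have hVeval : ∀ (u : ℂ) (i : Fin m),
      Polynomial.eval u (V i) = ∑ j ∈ Finset.range (d + 1), (u ^ d - 1) * u ^ j * γ i ^ j := by
    intro u i
    have h1 : Polynomial.eval u (V i) = (u ^ d - 1) * ∑ j ∈ Finset.range (d + 1), γ i ^ j * u ^ j := by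
      simp [hVdef, hqdef, hGdef, Polynomial.eval_finset_sum]
    rw [h1, Finset.mul_sum]
    exact Finset.sum_congr rfl fun j _ => by ring
  have hkey : ∀ j : Fin (d + 1),
      MvPolynomial.aeval V (p j) = q * Polynomial.X ^ (j : ℕ) := by
    intro j
    apply Polynomial.funext
    intro u
    have h1 : Polynomial.eval u (MvPolynomial.aeval V (p j))
        = MvPolynomial.eval (fun i => Polynomial.eval u (V i)) (p j) := by
      calc Polynomial.eval u (MvPolynomial.aeval V (p j))
          = Polynomial.aeval u (MvPolynomial.aeval V (p j)) := by
            rw [Polynomial.coe_aeval_eq_eval]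
        _ = MvPolynomial.aeval (fun i => Polynomial.aeval u (V i)) (p j) :=
            MvPolynomial.comp_aeval_apply _ _ _
        _ = MvPolynomial.eval (fun i => Polynomial.eval u (V i)) (p j) := by
            simp only [Polynomial.coe_aeval_eq_eval]
            rfl
    rw [h1]
    have h3 := congrFun (h u) j
    rw [hp] at h3
    have h4 : (fun i : Fin m => ∑ j ∈ Finset.range (d + 1), (u ^ d - 1) * u ^ j * γ i ^ j)
        = fun i => Polynomial.eval u (V i) := by
      funext i; rw [hVeval]
    rw [h4] at h3
    rw [h3]
    simp [hqdef]
  have hc : ∀ j : Fin (d + 1), MvPolynomial.constantCoeff (p j) = 0 := by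
    intro j
    have h1 := congrFun (h 1) j
    have h2 : (fun i : Fin m => ∑ j ∈ Finset.range (d + 1), ((1 : ℂ) ^ d - 1) * 1 ^ j * γ i ^ j)
        = fun _ : Fin m => (0 : ℂ) := by
      funext i; simp
    rw [h2, hp] at h1
    simpa [MvPolynomial.eval_zero] using h1
  set A : Fin (d + 1) → Fin m → ℂ :=
    fun j i => MvPolynomial.coeff (Finsupp.single i 1) (p j) with hAdef
  have hdiv : ∀ j : Fin (d + 1),
      q ∣ Polynomial.X ^ (j : ℕ) - ∑ i, Polynomial.C (A j i) * G i := by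
    intro j
    have h2 := aux_lin_dvd q V hVdvd (p j)
    rw [hkey j, hc j, map_zero, sub_zero] at h2
    obtain ⟨w, hw⟩ := h2
    refine ⟨w, mul_left_cancel₀ hqne ?_⟩
    have h3 : q * (Polynomial.X ^ (j : ℕ) - ∑ i, Polynomial.C (A j i) * G i)
        = q * Polynomial.X ^ (j : ℕ) - ∑ i, Polynomial.C (A j i) * V i := by
      rw [mul_sub, Finset.mul_sum]
      congr 1
      exact Finset.sum_congr rfl fun i _ => by rw [hVdef]; ring
    rw [h3, hw, sq, mul_assoc]
  -- roots of unity
  have ζprim := Complex.isPrimitiveRoot_exp d (by omega)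
  set ζ : ℂ := Complex.exp (2 * Real.pi * Complex.I / d) with hζdef
  have hζd : ∀ k : Fin d, (ζ ^ (k : ℕ)) ^ d = 1 := by
    intro k
    rw [← pow_mul, mul_comm, pow_mul, ζprim.pow_eq_one, one_pow]
  have hroot : ∀ (j : Fin (d + 1)) (k : Fin d),
      (ζ ^ (k : ℕ)) ^ (j : ℕ) = ∑ i, A j i * Polynomial.eval (ζ ^ (k : ℕ)) (G i) := by
    intro j k
    obtain ⟨w, hw⟩ := hdiv j
    have h1 := congrArg (Polynomial.eval (ζ ^ (k : ℕ))) hw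
    rw [Polynomial.eval_mul, Polynomial.eval_sub, Polynomial.eval_pow, Polynomial.eval_X,
      Polynomial.eval_finset_sum] at h1
    have h2 : Polynomial.eval (ζ ^ (k : ℕ)) q = 0 := by
      simp [hqdef, hζd k]
    rw [h2, zero_mul, sub_eq_zero] at h1
    rw [h1]
    exact Finset.sum_congr rfl fun i _ => by simp
  -- linear independence
  set W : Fin d → (Fin m → ℂ) := fun k i => Polynomial.eval (ζ ^ (k : ℕ)) (G i) with hWdef
  have hvand : LinearIndependent ℂ (fun k : Fin d => fun j : Fin (d + 1) => (ζ ^ (k : ℕ)) ^ (j : ℕ)) := by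
    apply LinearIndependent.of_comp (LinearMap.funLeft ℂ ℂ (Fin.castSucc))
    have hdet : (Matrix.vandermonde (fun k : Fin d => ζ ^ (k : ℕ))).det ≠ 0 := by
      rw [Matrix.det_vandermonde]
      apply Finset.prod_ne_zero_iff.mpr
      intro i _
      apply Finset.prod_ne_zero_iff.mpr
      intro j hj
      have hij : (i : ℕ) < (j : ℕ) := Fin.lt_def.mp (Finset.mem_Ioi.mp hj)
      refine sub_ne_zero.mpr fun he => ?_
      have := ζprim.pow_inj j.isLt i.isLt he
      omega
    have h1 := Matrix.linearIndependent_rows_iff_isUnit.mpr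
      ((Matrix.isUnit_iff_isUnit_det _).mpr (isUnit_iff_ne_zero.mpr hdet))
    have heq2 : (⇑(LinearMap.funLeft ℂ ℂ (Fin.castSucc : Fin d → Fin (d + 1)))
        ∘ fun k : Fin d => fun j : Fin (d + 1) => (ζ ^ (k : ℕ)) ^ (j : ℕ))
        = fun k : Fin d => Matrix.vandermonde (fun k : Fin d => ζ ^ (k : ℕ)) k := by
      funext k j
      simp [Matrix.vandermonde, LinearMap.funLeft]
    rw [heq2]
    exact h1
  have hWlin : LinearIndependent ℂ W := by
    apply LinearIndependent.of_comp (Matrix.mulVecLin (Matrix.of A))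
    have heq : (⇑(Matrix.mulVecLin (Matrix.of A)) ∘ W)
        = fun k : Fin d => fun j : Fin (d + 1) => (ζ ^ (k : ℕ)) ^ (j : ℕ) := by
      funext k j
      simp only [Function.comp_apply, Matrix.mulVecLin_apply, Matrix.mulVec, dotProduct,
        Matrix.of_apply]
      rw [hroot j k]
    rw [heq]
    exact hvand
  have hcard := hWlin.fintype_card_le_finrank
  simpa using hcard
end

section
/- Let d ≥ 1 and let ζ := exp(2πi/d) ∈ ℂ, a primitive d-th root of unity. For 0 ≤ j ≤ d let p_j ∈ ℂ[U] be the polynomial (U^d − 1)U^j and let p_j' denote its derivative. For 0 ≤ k ≤ d−1 set v_k := (p_0'(ζ^k), p_1'(ζ^k), …, p_d'(ζ^k)) ∈ ℂ^{d+1}. Then the d vectors v_0, …, v_{d−1} are linearly independent over ℂ. -/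
open Polynomial

/-- Let `d ≥ 1`, `ζ = exp(2πi/d)` and `p_j = (U^d − 1)U^j` for `0 ≤ j ≤ d`.
The `d` vectors `v_k = (p_0'(ζ^k), …, p_d'(ζ^k))`, `0 ≤ k ≤ d−1`, are linearly
independent over `ℂ`. -/
theorem tangent_vectors_linearIndependent (d : ℕ) (hd : 1 ≤ d) :
    LinearIndependent ℂ
      (fun k : Fin d => fun j : Fin (d + 1) =>
        Polynomial.eval ((Complex.exp (2 * (Real.pi : ℂ) * Complex.I / (d : ℂ))) ^ (k : ℕ))
          (Polynomial.derivative
            ((Polynomial.X ^ d - 1) * Polynomial.X ^ (j : ℕ) : Polynomial ℂ))) := by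
  have hd0 : d ≠ 0 := by omega
  set ζ : ℂ := Complex.exp (2 * (Real.pi : ℂ) * Complex.I / (d : ℂ)) with hζ
  have hprim : IsPrimitiveRoot ζ d := Complex.isPrimitiveRoot_exp d hd0
  have hζd : ζ ^ d = 1 := hprim.pow_eq_one
  have hζne : ζ ≠ 0 := fun h => by simp [h, zero_pow hd0] at hζd
  have hdC : (d : ℂ) ≠ 0 := Nat.cast_ne_zero.mpr hd0
  -- scalar units
  set c : Fin d → ℂˣ := fun k =>
    Units.mk0 ((d : ℂ) * (ζ ^ (k : ℕ)) ^ (d - 1))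
      (mul_ne_zero hdC (pow_ne_zero _ (pow_ne_zero _ hζne)))
  set u : Fin d → Fin (d + 1) → ℂ := fun k j => (ζ ^ (k : ℕ)) ^ (j : ℕ) with hu
  have key : (fun k : Fin d => fun j : Fin (d + 1) =>
      Polynomial.eval (ζ ^ (k : ℕ))
        (Polynomial.derivative
          ((Polynomial.X ^ d - 1) * Polynomial.X ^ (j : ℕ) : Polynomial ℂ)))
      = fun k => (c k : ℂ) • u k := by
    funext k j
    have hx : (ζ ^ (k : ℕ)) ^ d = 1 := by
      rw [← pow_mul, mul_comm, pow_mul, hζd, one_pow]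
    simp only [derivative_mul, derivative_sub, derivative_X_pow, derivative_one, sub_zero,
      eval_add, eval_mul, eval_pow, eval_X, eval_sub, eval_one, eval_natCast, eval_C, eval_mul,
      eval_smul, Pi.smul_apply, smul_eq_mul, hu, Units.val_mk0, c]
    rw [hx]
    ring
  rw [key]
  have hind : LinearIndependent ℂ u := by
    have hinj : Function.Injective (fun k : Fin d => ζ ^ (k : ℕ)) := by
      intro a b hab
      exact Fin.ext (hprim.pow_inj a.isLt b.isLt hab)
    have hA : LinearIndependent ℂ
        (fun k : Fin d => (Matrix.vandermonde fun k : Fin d => ζ ^ (k : ℕ)) k) :=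
      Matrix.linearIndependent_rows_iff_isUnit.2
        (by
          rw [Matrix.isUnit_iff_isUnit_det, isUnit_iff_ne_zero]
          exact Matrix.det_vandermonde_ne_zero_iff.2 hinj)
    apply LinearIndependent.of_comp (LinearMap.funLeft ℂ ℂ Fin.castSucc)
    exact hA
  exact hind.units_smul c
end

section
/- Let d ≥ 1. Then: (a) the image {((u^d − 1)u^j)_{j=0,…,d} : u ∈ ℂ} of the map ω_d : ℂ → ℂ^{d+1} is a Zariski closed subset of ℂ^{d+1}; and (b) the polynomial ring ℚ[U] in one variable is a finitely generated module over its ℚ-subalgebra generated by the d+1 polynomials U^d − 1, (U^d − 1)U, (U^d − 1)U², …, (U^d − 1)U^d. -/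
set_option synthInstance.maxHeartbeats 1000000

/-- Let `d ≥ 1`. (a) The image of `ω_d : ℂ → ℂ^{d+1}`,
`ω_d(u) = ((u^d−1)u^j)_{j=0..d}`, is Zariski closed; and (b) `ℚ[U]` is a
finitely generated module over its `ℚ`-subalgebra generated by the `d+1`
polynomials `(U^d−1)U^j`, `0 ≤ j ≤ d`; i.e. `ω_d` is a finite morphism onto its
image. -/
theorem omega_d_finite_morphism_onto_closed_image (d : ℕ) (hd : 1 ≤ d) :
    ZariskiClosed {v : Fin (d + 1) → ℂ |
        ∃ u : ℂ, v = fun j : Fin (d + 1) => (u ^ d - 1) * u ^ (j : ℕ)} ∧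
      Module.Finite
        (Algebra.adjoin ℚ
          (Set.range fun j : Fin (d + 1) =>
            ((Polynomial.X : Polynomial ℚ) ^ d - 1) * Polynomial.X ^ (j : ℕ)))
        (Polynomial ℚ) := by
  constructor
  · -- part (a)
    classical
    refine ⟨{f | (∃ a : ℕ, ∃ _ : a < d,
          f = MvPolynomial.X ⟨1, by omega⟩ * MvPolynomial.X ⟨a, by omega⟩
            - MvPolynomial.X ⟨0, by omega⟩ * MvPolynomial.X ⟨a + 1, by omega⟩)
        ∨ (∃ a : ℕ, ∃ _ : 1 ≤ a ∧ 2 * a ≤ d,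
          f = MvPolynomial.X ⟨a, by omega⟩ ^ 2
            - MvPolynomial.X ⟨0, by omega⟩ * MvPolynomial.X ⟨2 * a, by omega⟩)
        ∨ (∃ a : ℕ, ∃ _ : a ≤ d ∧ d < 2 * a,
          f = MvPolynomial.X ⟨a, by omega⟩ ^ 2
            - MvPolynomial.X ⟨0, by omega⟩ * (MvPolynomial.X ⟨0, by omega⟩ + 1)
              * MvPolynomial.X ⟨2 * a - d, by omega⟩)
        ∨ f = MvPolynomial.X ⟨d, by omega⟩ - MvPolynomial.X ⟨0, by omega⟩ ^ 2
            - MvPolynomial.X ⟨0, by omega⟩}, ?_⟩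
    ext v
    simp only [Set.mem_setOf_eq]
    constructor
    · rintro ⟨u, rfl⟩ f hf
      obtain ⟨a, ha, rfl⟩ | ⟨a, ⟨ha1, ha2⟩, rfl⟩ | ⟨a, ⟨ha1, ha2⟩, rfl⟩ | rfl := hf
      · simp only [map_sub, map_mul, map_pow, MvPolynomial.eval_X]
        ring
      · simp only [map_sub, map_mul, map_pow, MvPolynomial.eval_X]
        ring
      · simp only [map_sub, map_mul, map_pow, map_add, map_one, MvPolynomial.eval_X]
        have h1 : u ^ a * u ^ a = u ^ (2 * a - d) * u ^ d := by
          rw [← pow_add, ← pow_add]; congr 1; omega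
        linear_combination (u ^ d - 1) ^ 2 * h1
      · simp only [map_sub, map_mul, map_pow, MvPolynomial.eval_X]
        ring
    · intro hv
      have hg : ∀ (a : ℕ) (ha : a < d),
          v ⟨1, by omega⟩ * v ⟨a, by omega⟩ = v ⟨0, by omega⟩ * v ⟨a + 1, by omega⟩ := by
        intro a ha
        have := hv _ (Or.inl ⟨a, ha, rfl⟩)
        simpa only [map_sub, map_mul, MvPolynomial.eval_X, sub_eq_zero] using this
      have hh1 : ∀ (a : ℕ) (ha1 : 1 ≤ a) (ha2 : 2 * a ≤ d),
          v ⟨a, by omega⟩ ^ 2 = v ⟨0, by omega⟩ * v ⟨2 * a, by omega⟩ := by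
        intro a ha1 ha2
        have := hv _ (Or.inr (Or.inl ⟨a, ⟨ha1, ha2⟩, rfl⟩))
        simpa only [map_sub, map_mul, map_pow, MvPolynomial.eval_X, sub_eq_zero] using this
      have hh2 : ∀ (a : ℕ) (ha1 : a ≤ d) (ha2 : d < 2 * a),
          v ⟨a, by omega⟩ ^ 2
            = v ⟨0, by omega⟩ * (v ⟨0, by omega⟩ + 1) * v ⟨2 * a - d, by omega⟩ := by
        intro a ha1 ha2
        have := hv _ (Or.inr (Or.inr (Or.inl ⟨a, ⟨ha1, ha2⟩, rfl⟩)))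
        simpa only [map_sub, map_mul, map_pow, map_add, map_one, MvPolynomial.eval_X,
          sub_eq_zero] using this
      have he : v ⟨d, by omega⟩ - v ⟨0, by omega⟩ ^ 2 - v ⟨0, by omega⟩ = 0 := by
        have := hv _ (Or.inr (Or.inr (Or.inr rfl)))
        simpa only [map_sub, map_mul, map_pow, MvPolynomial.eval_X] using this
      by_cases hz : v ⟨0, by omega⟩ = 0
      · refine ⟨1, ?_⟩
        funext j
        simp only [one_pow, mul_one, sub_self, zero_mul]
        have hje : (⟨(j : ℕ), by omega⟩ : Fin (d + 1)) = j := Fin.eta j j.isLt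
        rcases Nat.eq_zero_or_pos (j : ℕ) with hj | hj
        · have : j = ⟨0, by omega⟩ := by
            apply Fin.ext; simpa using hj
          rw [this, hz]
        · have hjd : (j : ℕ) ≤ d := by omega
          by_cases h2 : 2 * (j : ℕ) ≤ d
          · have h := hh1 (j : ℕ) hj h2
            rw [hz, zero_mul] at h
            have := pow_eq_zero_iff (n := 2) (by norm_num) |>.mp h
            rwa [hje] at this
          · have h := hh2 (j : ℕ) hjd (by omega)
            rw [hz, zero_mul, zero_mul] at h
            have := pow_eq_zero_iff (n := 2) (by norm_num) |>.mp h
            rwa [hje] at this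
      · set u := v ⟨1, by omega⟩ / v ⟨0, by omega⟩ with hu
        have hv1 : v ⟨1, by omega⟩ = v ⟨0, by omega⟩ * u := by
          rw [hu, mul_comm, div_mul_cancel₀ _ hz]
        have key : ∀ (a : ℕ) (ha : a ≤ d), v ⟨a, by omega⟩ = v ⟨0, by omega⟩ * u ^ a := by
          intro a
          induction a with
          | zero => intro _; simp
          | succ n ih =>
            intro hn
            have h1 := hg n (by omega)
            have h2 := ih (by omega)
            rw [h2, hv1] at h1
            apply mul_left_cancel₀ hz
            rw [← h1]; ring
        have hud : u ^ d = v ⟨0, by omega⟩ + 1 := by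
          have h1 := key d le_rfl
          rw [h1] at he
          apply mul_left_cancel₀ hz
          linear_combination he
        refine ⟨u, ?_⟩
        funext j
        have h1 := key (j : ℕ) (by omega)
        rw [Fin.eta j j.isLt] at h1
        rw [h1, hud]; ring
  · -- part (b)
    set A := Algebra.adjoin ℚ
        (Set.range fun j : Fin (d + 1) =>
          ((Polynomial.X : Polynomial ℚ) ^ d - 1) * Polynomial.X ^ (j : ℕ)) with hA
    have hmem : ((Polynomial.X : Polynomial ℚ) ^ d - 1) ∈ A := by
      have h0 : ((Polynomial.X : Polynomial ℚ) ^ d - 1)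
          = ((Polynomial.X : Polynomial ℚ) ^ d - 1)
            * Polynomial.X ^ (((0 : Fin (d + 1))) : ℕ) := by simp
      rw [h0]
      exact Algebra.subset_adjoin ⟨0, rfl⟩
    have hXd : ((Polynomial.X : Polynomial ℚ) ^ d) ∈ A := by
      have h0 : ((Polynomial.X : Polynomial ℚ) ^ d)
          = ((Polynomial.X : Polynomial ℚ) ^ d - 1) + 1 := by ring
      rw [h0]
      exact add_mem hmem (one_mem A)
    have hint : IsIntegral A (Polynomial.X : Polynomial ℚ) := by
      refine ⟨Polynomial.X ^ d - Polynomial.C (⟨_, hXd⟩ : A),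
        Polynomial.monic_X_pow_sub_C _ (by omega), ?_⟩
      have : Polynomial.eval₂ (algebraMap A (Polynomial ℚ)) Polynomial.X
          (Polynomial.X ^ d - Polynomial.C (⟨_, hXd⟩ : A))
          = Polynomial.X ^ d - algebraMap A (Polynomial ℚ) ⟨_, hXd⟩ := by
        simp
      rw [this]
      have : algebraMap A (Polynomial ℚ) ⟨_, hXd⟩ = (Polynomial.X : Polynomial ℚ) ^ d := rfl
      rw [this, sub_self]
    have htop : Algebra.adjoin A {(Polynomial.X : Polynomial ℚ)} = ⊤ := by
      apply Subalgebra.restrictScalars_injective ℚ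
      rw [Subalgebra.restrictScalars_top, eq_top_iff, ← Polynomial.adjoin_X (R := ℚ)]
      apply Algebra.adjoin_le
      intro x hx
      rw [Set.mem_singleton_iff] at hx
      subst hx
      exact (Subalgebra.mem_restrictScalars ℚ).mpr (Algebra.subset_adjoin rfl)
    refine ⟨?_⟩
    have hfg := hint.fg_adjoin_singleton
    rw [htop] at hfg
    simpa using hfg
end

section
/- Let n ≥ 1. Define ω^{(n)} : ℂ × ℂ^n → ℂ^{2^n} by letting ω^{(n)}(t,u) be the coefficient vector (B_1,…,B_{2^n}) determined by the identity ∏_{j=0}^{2^n−1}(Y − (j + t·∏_{i=1}^n u_i^{[j]_i})) = Y^{2^n} + Σ_{k=1}^{2^n} B_k Y^{2^n−k} in ℂ[Y], and let β^{(n)} := ω^{(n)}(0,u) (which is independent of u ∈ ℂ^n). Let m be a natural number and suppose there are polynomial maps θ : ℂ × ℂ^n → ℂ^m and σ : ℂ^m → ℂ^{2^n} with σ ∘ θ = ω^{(n)}, and suppose that the set {x ∈ range(θ) : σ(x) = β^{(n)}} is finite (a condition that holds whenever σ is a robust encoding). Then m ≥ 2^n. -/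
open scoped BigOperators

/-- A polynomial map `ℂ × ℂ^n → ℂ^b`: each coordinate is given by evaluating a
polynomial in `n+1` variables with complex coefficients. -/
def IsPolyMapProd (n b : ℕ) (f : ℂ × (Fin n → ℂ) → (Fin b → ℂ)) : Prop :=
  ∃ p : Fin b → MvPolynomial (Fin (n + 1)) ℂ,
    ∀ (t : ℂ) (u : Fin n → ℂ) (i : Fin b),
      f (t, u) i = MvPolynomial.eval (Fin.cons t u) (p i)

/-- `ω^{(n)}(t,u)` is the coefficient vector `(B_1,…,B_{2^n})` determined by
`∏_{j=0}^{2^n−1}(Y − (j + t·∏_i u_i^{[j]_i})) = Y^{2^n} + Σ_k B_k Y^{2^n−k}`,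
where `[j]_i` is the `i`-th binary digit of `j`. -/
noncomputable def omegaN (n : ℕ) (t : ℂ) (u : Fin n → ℂ) : Fin (2 ^ n) → ℂ :=
  fun k =>
    (∏ j ∈ Finset.range (2 ^ n),
        (Polynomial.X -
          Polynomial.C ((j : ℂ) + t * ∏ i : Fin n, u i ^ (Nat.testBit j i.val).toNat))).coeff
      (2 ^ n - 1 - (k : ℕ))

open Polynomial

/-! ### Auxiliary lemmas -/

lemma sum_testBit (n : ℕ) : ∀ j : ℕ, j < 2^n →
    ∑ i ∈ Finset.range n, (Nat.testBit j i).toNat * 2^i = j := by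
  induction n with
  | zero => intro j hj; interval_cases j <;> simp
  | succ n ih =>
    intro j hj
    rw [Finset.sum_range_succ']
    have h1 : ∀ i, (Nat.testBit j (i+1)).toNat * 2^(i+1)
        = 2 * ((Nat.testBit (j/2) i).toNat * 2^i) := by
      intro i; rw [Nat.testBit_add_one]; ring
    simp only [h1, ← Finset.mul_sum]
    rw [ih (j/2) (by omega)]
    simp [Nat.testBit_zero]
    rcases Nat.even_or_odd j with h | h
    · have : j % 2 = 0 := Nat.even_iff.mp h
      simp [this]; omega
    · have : j % 2 = 1 := Nat.odd_iff.mp h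
      simp [this]; omega

lemma prod_pow_testBit (n j : ℕ) (h : j < 2^n) (z : ℂ) :
    ∏ i : Fin n, (z ^ (2^(i:ℕ))) ^ (Nat.testBit j i.val).toNat = z ^ j := by
  calc ∏ i : Fin n, (z ^ (2^(i:ℕ))) ^ (Nat.testBit j i.val).toNat
      = ∏ i ∈ Finset.range n, z ^ ((Nat.testBit j i).toNat * 2^i) := by
        rw [Fin.prod_univ_eq_prod_range (fun i => (z ^ 2^i) ^ (Nat.testBit j i).toNat)]
        refine Finset.prod_congr rfl fun i _ => ?_
        rw [← pow_mul, mul_comm]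
    _ = z ^ j := by rw [Finset.prod_pow_eq_pow_sum, sum_testBit n j h]

lemma mv_coeff_zero_aeval {k : ℕ} (q : MvPolynomial (Fin k) ℂ) (f : Fin k → Polynomial ℂ) :
    (MvPolynomial.aeval f q).coeff 0 = MvPolynomial.eval (fun i => (f i).coeff 0) q := by
  rw [coeff_zero_eq_eval_zero, ← Polynomial.coe_aeval_eq_eval,
    MvPolynomial.comp_aeval_apply (f := f) (Polynomial.aeval (0:ℂ)) q]
  rw [show (MvPolynomial.eval (fun i => (f i).coeff 0) q)
      = (MvPolynomial.aeval (R := ℂ) (fun i => (f i).coeff 0) q) from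
    (RingHom.congr_fun (MvPolynomial.coe_aeval_eq_eval _) q).symm]
  simp [Polynomial.coe_aeval_eq_eval, coeff_zero_eq_eval_zero]

lemma eval_mv_aeval_poly {k : ℕ} (q : MvPolynomial (Fin k) ℂ) (g : Fin k → Polynomial ℂ) (t : ℂ) :
    Polynomial.eval t (MvPolynomial.aeval g q)
      = MvPolynomial.eval (fun v => Polynomial.eval t (g v)) q := by
  have h0 : Polynomial.eval t (MvPolynomial.aeval g q)
      = Polynomial.aeval t (MvPolynomial.aeval g q) :=
    (congrFun (Polynomial.coe_aeval_eq_eval t) _).symm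
  rw [h0, MvPolynomial.comp_aeval_apply]
  have h1 : (fun v => Polynomial.aeval t (g v)) = fun v => Polynomial.eval t (g v) :=
    funext fun v => congrFun (Polynomial.coe_aeval_eq_eval t) (g v)
  rw [h1]
  exact RingHom.congr_fun (MvPolynomial.coe_aeval_eq_eval _) q

lemma mv_coeff_one_aeval {k : ℕ} (q : MvPolynomial (Fin k) ℂ) (f : Fin k → Polynomial ℂ) :
    (MvPolynomial.aeval f q).coeff 1 =
      ∑ i, MvPolynomial.eval (fun j => (f j).coeff 0) (MvPolynomial.pderiv i q) * (f i).coeff 1 := by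
  induction q using MvPolynomial.induction_on with
  | C a => simp
  | add p₁ p₂ h₁ h₂ => simp [map_add, h₁, h₂, coeff_add, Finset.sum_add_distrib, add_mul]
  | mul_X p i h =>
    rw [map_mul, MvPolynomial.aeval_X, Polynomial.mul_coeff_one, h, mv_coeff_zero_aeval]
    have hd : ∀ j : Fin k, MvPolynomial.eval (fun j => (f j).coeff 0)
        (MvPolynomial.pderiv j (p * MvPolynomial.X i))
        = MvPolynomial.eval (fun j => (f j).coeff 0) (MvPolynomial.pderiv j p) * (f i).coeff 0
          + MvPolynomial.eval (fun j => (f j).coeff 0) p * (if i = j then 1 else 0) := by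
      intro j
      rw [MvPolynomial.pderiv_mul]
      by_cases hij : i = j
      · subst hij; simp [MvPolynomial.pderiv_X_self]
      · rw [MvPolynomial.pderiv_X_of_ne hij]; simp [hij]
    simp only [hd, add_mul]
    rw [Finset.sum_add_distrib]
    have hB : (∑ x, ((MvPolynomial.eval (fun j => (f j).coeff 0) p * if i = x then 1 else 0)
        * (f x).coeff 1)) = MvPolynomial.eval (fun j => (f j).coeff 0) p * (f i).coeff 1 := by
      rw [Finset.sum_eq_single i]
      · simp
      · intro b _ hbi; simp [(Ne.symm hbi : ¬ i = b)]
      · simp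
    have hA : (∑ x, (MvPolynomial.eval (fun j => (f j).coeff 0) (MvPolynomial.pderiv x p)
          * (f i).coeff 0) * (f x).coeff 1)
        = (∑ x, MvPolynomial.eval (fun j => (f j).coeff 0) (MvPolynomial.pderiv x p)
            * (f x).coeff 1) * (f i).coeff 0 := by
      rw [Finset.sum_mul]; exact Finset.sum_congr rfl fun j _ => by ring
    rw [hA, hB]; ring

lemma coeff_one_prod {R} [CommRing R] (s : Finset ℕ) (a b : ℕ → R) :
    (∏ j ∈ s, (Polynomial.C (a j) + Polynomial.C (b j) * Polynomial.X)).coeff 1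
      = ∑ j ∈ s, b j * ∏ l ∈ s.erase j, a l := by
  classical
  induction s using Finset.induction_on with
  | empty => simp [Polynomial.coeff_one]
  | insert x s hx ih =>
    rw [Finset.prod_insert hx, Polynomial.mul_coeff_one, ih, Finset.sum_insert hx,
      Finset.erase_insert hx]
    have h0 : (∏ j ∈ s, (Polynomial.C (a j) + Polynomial.C (b j) * Polynomial.X)).coeff 0
        = ∏ l ∈ s, a l := by
      rw [coeff_zero_eq_eval_zero, eval_prod]; simp
    have hc1 : (Polynomial.C (a x) + Polynomial.C (b x) * Polynomial.X).coeff 1 = b x := by simp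
    have hc0 : (Polynomial.C (a x) + Polynomial.C (b x) * Polynomial.X).coeff 0 = a x := by simp
    rw [h0, hc1, hc0, Finset.mul_sum]
    rw [Finset.sum_congr rfl (fun j hj => show a x * (b j * ∏ l ∈ s.erase j, a l)
        = b j * ∏ l ∈ (insert x s).erase j, a l by
      rw [Finset.erase_insert_of_ne (by rintro rfl; exact hx hj),
        Finset.prod_insert (fun h => hx (Finset.mem_of_mem_erase h))]
      ring)]
    exact add_comm _ _

lemma eval_coeffApply (p : Polynomial (Polynomial ℂ)) (d : ℕ) (t : ℂ) :
    Polynomial.eval t (∑ e ∈ p.support, Polynomial.C ((p.coeff e).coeff d) * Polynomial.X^e)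
      = (Polynomial.eval (Polynomial.C t) p).coeff d := by
  conv_rhs => rw [Polynomial.eval_eq_sum, Polynomial.sum_def]
  rw [Polynomial.finset_sum_coeff, Polynomial.eval_finset_sum]
  refine Finset.sum_congr rfl fun e _ => ?_
  rw [← Polynomial.C_pow, Polynomial.coeff_mul_C]
  rw [Polynomial.eval_mul, Polynomial.eval_C, Polynomial.eval_pow, Polynomial.eval_X]

lemma coeff_coeffApply (p : Polynomial (Polynomial ℂ)) (d e0 : ℕ) :
    (∑ e ∈ p.support, Polynomial.C ((p.coeff e).coeff d) * Polynomial.X^e).coeff e0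
      = (p.coeff e0).coeff d := by
  rw [Polynomial.finset_sum_coeff]
  simp only [Polynomial.coeff_C_mul, Polynomial.coeff_X_pow]
  rw [Finset.sum_eq_single e0]
  · simp
  · intro b _ hb; simp [Ne.symm hb]
  · intro h
    simp only [Polynomial.notMem_support_iff] at h
    simp [h]

/-- The Lagrange-type polynomial `∏_{l < N, l ≠ j} (X - l)`. -/
noncomputable def PolJ (N j : ℕ) : Polynomial ℂ :=
  ∏ l ∈ (Finset.range N).erase j, (Polynomial.X - Polynomial.C (l:ℂ))

lemma lagrange_indep (N : ℕ) (μ : Fin N → ℂ)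
    (h : ∀ j ∈ Finset.range N, ∑ d : Fin N, μ d * (PolJ N j).coeff (d:ℕ) = 0) : μ = 0 := by
  classical
  set v : Fin N → ℂ := fun l => ((l : ℕ) : ℂ) with hv
  set B : Matrix (Fin N) (Fin N) ℂ := Matrix.of fun j d => (PolJ N (j:ℕ)).coeff (d:ℕ) with hB
  set W : Matrix (Fin N) (Fin N) ℂ := (Matrix.vandermonde v).transpose with hW
  have hdeg : ∀ j : Fin N, (PolJ N (j:ℕ)).natDegree < N := by
    intro j
    have h1 : (PolJ N (j:ℕ)).natDegree ≤ ∑ l ∈ (Finset.range N).erase (j:ℕ),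
        (Polynomial.X - Polynomial.C ((l:ℕ):ℂ)).natDegree := Polynomial.natDegree_prod_le _ _
    calc (PolJ N (j:ℕ)).natDegree ≤ ∑ l ∈ (Finset.range N).erase (j:ℕ), 1 := by
          refine le_trans h1 (le_of_eq (Finset.sum_congr rfl fun l _ =>
            Polynomial.natDegree_X_sub_C _))
      _ = N - 1 := by
          rw [Finset.sum_const, smul_eq_mul, mul_one,
            Finset.card_erase_of_mem (Finset.mem_range.mpr j.isLt), Finset.card_range]
      _ < N := by have := j.isLt; omega
  have hBW : B * W = Matrix.diagonal (fun j : Fin N => Polynomial.eval (v j) (PolJ N (j:ℕ))) := by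
    ext j l
    rw [Matrix.mul_apply]
    have : ∑ d : Fin N, B j d * W d l = ∑ d ∈ Finset.range N, (PolJ N (j:ℕ)).coeff d * v l ^ d := by
      rw [← Fin.sum_univ_eq_sum_range (fun d => (PolJ N (j:ℕ)).coeff d * v l ^ d)]
      refine Finset.sum_congr rfl fun d _ => ?_
      simp [hB, hW, Matrix.vandermonde, Matrix.transpose_apply]
    rw [this, ← Polynomial.eval_eq_sum_range' (hdeg j)]
    by_cases hjl : j = l
    · subst hjl; simp [Matrix.diagonal]
    · rw [Matrix.diagonal_apply_ne _ hjl]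
      unfold PolJ
      rw [Polynomial.eval_prod]
      refine Finset.prod_eq_zero (i := (l : ℕ)) ?_ ?_
      · exact Finset.mem_erase.mpr ⟨fun hc => hjl (Fin.ext hc).symm, Finset.mem_range.mpr l.isLt⟩
      · simp [hv]
  have hdiag : ∀ j : Fin N, Polynomial.eval (v j) (PolJ N (j:ℕ)) ≠ 0 := by
    intro j
    unfold PolJ
    rw [Polynomial.eval_prod]
    refine Finset.prod_ne_zero_iff.mpr fun l hl => ?_
    simp only [Polynomial.eval_sub, Polynomial.eval_X, Polynomial.eval_C]
    rw [Finset.mem_erase] at hl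
    have : (j:ℕ) ≠ l := fun hc => hl.1 hc.symm
    intro hc
    rw [sub_eq_zero] at hc
    exact this (Nat.cast_injective hc)
  have hdetB : B.det ≠ 0 := by
    intro hc
    have h2 : (B * W).det = 0 := by rw [Matrix.det_mul, hc, zero_mul]
    rw [hBW, Matrix.det_diagonal] at h2
    exact (Finset.prod_ne_zero_iff.mpr fun j _ => hdiag j) h2
  have hmul : B.mulVec μ = 0 := by
    funext j
    simp only [Matrix.mulVec, dotProduct, Pi.zero_apply]
    have := h (j:ℕ) (Finset.mem_range.mpr j.isLt)
    rw [← this]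
    exact Finset.sum_congr rfl fun d _ => mul_comm _ _
  exact Matrix.eq_zero_of_mulVec_eq_zero hdetB hmul

/-- The product `∏_{j<N} ((Y - j) - z^j · t)` viewed as a polynomial in `t`
with coefficients in `ℂ[Y]`. -/
noncomputable def Vz (N : ℕ) (z : ℂ) : Polynomial (Polynomial ℂ) :=
  ∏ j ∈ Finset.range N,
    (Polynomial.C (Polynomial.X - Polynomial.C (j:ℂ))
      + Polynomial.C (- Polynomial.C (z^j)) * Polynomial.X)

lemma Vz_eval (N : ℕ) (z t : ℂ) :
    Polynomial.eval (Polynomial.C t) (Vz N z)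
      = ∏ j ∈ Finset.range N, (Polynomial.X - Polynomial.C ((j:ℂ) + t * z^j)) := by
  unfold Vz
  rw [Polynomial.eval_prod]
  refine Finset.prod_congr rfl fun j _ => ?_
  simp only [Polynomial.eval_add, Polynomial.eval_mul, Polynomial.eval_C, Polynomial.eval_X]
  rw [Polynomial.C_add, Polynomial.C_mul]
  ring

lemma Vz_coeff_one (N : ℕ) (z : ℂ) (d : ℕ) :
    ((Vz N z).coeff 1).coeff d = ∑ j ∈ Finset.range N, -(z^j * (PolJ N j).coeff d) := by
  unfold Vz
  rw [coeff_one_prod (Finset.range N) (fun j => Polynomial.X - Polynomial.C (j:ℂ))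
    (fun j => - Polynomial.C (z^j))]
  rw [Polynomial.finset_sum_coeff]
  refine Finset.sum_congr rfl fun j _ => ?_
  rw [neg_mul, Polynomial.coeff_neg, Polynomial.coeff_C_mul]
  rw [show (∏ l ∈ (Finset.range N).erase j, (Polynomial.X - Polynomial.C (l:ℂ))) = PolJ N j
    from rfl]

/-- If `θ : ℂ × ℂ^n → ℂ^m` and `σ : ℂ^m → ℂ^{2^n}` are polynomial maps with
`σ ∘ θ = ω^{(n)}`, and the set `{x ∈ range θ : σ(x) = β^{(n)}}` is finite
(where `β^{(n)} = ω^{(n)}(0,u)` for any `u`), then `m ≥ 2^n`. -/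
theorem size_lower_bound_robust_encoding (n m : ℕ) (hn : 1 ≤ n)
    (θ : ℂ × (Fin n → ℂ) → (Fin m → ℂ)) (σ : (Fin m → ℂ) → (Fin (2 ^ n) → ℂ))
    (hθ : IsPolyMapProd n m θ) (hσ : IsPolyMap σ)
    (hcomp : ∀ (t : ℂ) (u : Fin n → ℂ), σ (θ (t, u)) = omegaN n t u)
    (hfin : {x ∈ Set.range θ | σ x = omegaN n 0 0}.Finite) :
    2 ^ n ≤ m := by
  classical
  by_contra hcon
  push_neg at hcon
  obtain ⟨p, hp⟩ := hθ
  obtain ⟨s, hs⟩ := hσ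
  -- β is independent of u
  have homega0 : ∀ u : Fin n → ℂ, omegaN n 0 u = omegaN n 0 0 := by
    intro u; funext k; simp [omegaN]
  -- θ(0, ·) is constant
  have hconst : ∀ u : Fin n → ℂ, θ (0, u) = θ (0, 0) := by
    intro u
    set T : Set (Fin m → ℂ) := {x ∈ Set.range θ | σ x = omegaN n 0 0} with hT
    haveI : Finite ↥T := hfin.to_subtype
    haveI : DiscreteTopology ↥T := Finite.instDiscreteTopology
    have hmem : ∀ u : Fin n → ℂ, θ (0, u) ∈ T := by
      intro u
      refine ⟨⟨(0, u), rfl⟩, ?_⟩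
      rw [hcomp]; exact homega0 u
    have hcont : Continuous (fun u : Fin n → ℂ => θ (0, u)) := by
      have heq : (fun u : Fin n → ℂ => θ (0, u))
          = fun u => (fun i => MvPolynomial.eval (Fin.cons 0 u) (p i)) := by
        funext u; funext i; exact hp 0 u i
      rw [heq]
      refine continuous_pi fun i => ?_
      refine (MvPolynomial.continuous_eval (p i)).comp ?_
      refine continuous_pi fun j => ?_
      refine Fin.cases ?_ ?_ j
      · simpa using continuous_const
      · intro j'; simpa using continuous_apply j'
    exact IsPreconnected.constant_of_mapsTo (isPreconnected_univ) hfin.isDiscrete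
      hcont.continuousOn (fun x _ => hmem x) (Set.mem_univ u) (Set.mem_univ 0)
  set c : Fin m → ℂ := θ (0, 0) with hc
  -- the curve u(z)
  set uz : ℂ → (Fin n → ℂ) := fun z i => z ^ (2^(i:ℕ)) with huz
  set θpoly : Fin m → ℂ → Polynomial ℂ := fun i z =>
    MvPolynomial.aeval (Fin.cons Polynomial.X fun i' : Fin n => Polynomial.C (uz z i')) (p i)
    with hθpoly
  have hθeval : ∀ (t z : ℂ) (i : Fin m), Polynomial.eval t (θpoly i z) = θ (t, uz z) i := by
    intro t z i
    have harg : (fun v => Polynomial.eval t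
        ((Fin.cons (Polynomial.X : Polynomial ℂ) fun i' : Fin n => Polynomial.C (uz z i') :
          Fin (n+1) → Polynomial ℂ) v)) = Fin.cons t (uz z) := by
      funext v
      refine Fin.cases ?_ ?_ v
      · simp
      · intro v'; simp
    rw [hθpoly, eval_mv_aeval_poly, harg]
    exact (hp t (uz z) i).symm
  have hθ0 : ∀ (z : ℂ) (i : Fin m), (θpoly i z).coeff 0 = c i := by
    intro z i
    rw [coeff_zero_eq_eval_zero, hθeval 0 z i, hconst (uz z), hc]
  set σpoly : Fin (2^n) → ℂ → Polynomial ℂ := fun k z =>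
    MvPolynomial.aeval (fun i => θpoly i z) (s k) with hσpoly
  have hσeval : ∀ (t z : ℂ) (k : Fin (2^n)), Polynomial.eval t (σpoly k z) = σ (θ (t, uz z)) k := by
    intro t z k
    have harg : (fun i => Polynomial.eval t (θpoly i z)) = θ (t, uz z) := by
      funext i; exact hθeval t z i
    rw [hσpoly, eval_mv_aeval_poly, harg]
    exact (hs (θ (t, uz z)) k).symm
  -- relating omegaN along the curve to Vz
  have homega : ∀ (t z : ℂ) (k : Fin (2^n)),
      omegaN n t (uz z) k = (Polynomial.eval (Polynomial.C t) (Vz (2^n) z)).coeff (2^n - 1 - (k:ℕ)) := by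
    intro t z k
    rw [Vz_eval]
    unfold omegaN
    congr 1
    refine Finset.prod_congr rfl fun j hj => ?_
    rw [show (∏ i : Fin n, uz z i ^ (Nat.testBit j i.val).toNat) = z ^ j from
      prod_pow_testBit n j (Finset.mem_range.mp hj) z]
  -- key identity from comparing coefficients of t
  set M : Fin (2^n) → Fin m → ℂ := fun k i => MvPolynomial.eval c (MvPolynomial.pderiv i (s k))
    with hM
  have key : ∀ (z : ℂ) (k : Fin (2^n)),
      ∑ j ∈ Finset.range (2^n), -(z^j * (PolJ (2^n) j).coeff (2^n - 1 - (k:ℕ)))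
        = ∑ i, M k i * (θpoly i z).coeff 1 := by
    intro z k
    set L : Polynomial ℂ := ∑ e ∈ (Vz (2^n) z).support,
      Polynomial.C (((Vz (2^n) z).coeff e).coeff (2^n - 1 - (k:ℕ))) * Polynomial.X^e with hL
    have hLσ : L = σpoly k z := by
      apply Polynomial.funext
      intro t
      rw [hL, eval_coeffApply, hσeval t z k, hcomp t (uz z), homega t z k]
    have h1 : L.coeff 1 = ∑ j ∈ Finset.range (2^n), -(z^j * (PolJ (2^n) j).coeff (2^n - 1 - (k:ℕ))) := by
      rw [hL, coeff_coeffApply, Vz_coeff_one]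
    have h2 : (σpoly k z).coeff 1 = ∑ i, M k i * (θpoly i z).coeff 1 := by
      rw [hσpoly, mv_coeff_one_aeval]
      refine Finset.sum_congr rfl fun i _ => ?_
      rw [hM]
      have hfun : (fun j => (θpoly j z).coeff 0) = c := funext (hθ0 z)
      rw [hfun]
    rw [← h1, hLσ, h2]
  -- the rows M k are linearly dependent
  have hdep : ¬ LinearIndependent ℂ M := by
    intro hLI
    have hcard := hLI.fintype_card_le_finrank
    rw [Module.finrank_fin_fun, Fintype.card_fin] at hcard
    omega
  obtain ⟨g, hg0, k0, hgk0⟩ := Fintype.not_linearIndependent_iff.mp hdep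
  have hgi : ∀ i : Fin m, ∑ k, g k * M k i = 0 := by
    intro i
    have := congrFun hg0 i
    simpa [Finset.sum_apply] using this
  -- combine: for all z, ∑_j z^j · cc j = 0
  set cc : ℕ → ℂ := fun j => ∑ k : Fin (2^n), g k * (PolJ (2^n) j).coeff (2^n - 1 - (k:ℕ)) with hcc
  have hzero : ∀ z : ℂ, ∑ j ∈ Finset.range (2^n), cc j * z^j = 0 := by
    intro z
    have e2 : ∑ k : Fin (2^n), g k * (∑ i, M k i * (θpoly i z).coeff 1) = 0 := by
      rw [Finset.sum_congr rfl (fun (k : Fin (2^n)) _ => by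
        rw [Finset.mul_sum] :
        ∀ k ∈ Finset.univ, g k * (∑ i, M k i * (θpoly i z).coeff 1)
          = ∑ i, g k * (M k i * (θpoly i z).coeff 1))]
      rw [Finset.sum_comm]
      refine Finset.sum_eq_zero fun i _ => ?_
      have h5 : ∑ k : Fin (2^n), g k * (M k i * (θpoly i z).coeff 1)
          = (∑ k : Fin (2^n), g k * M k i) * (θpoly i z).coeff 1 := by
        rw [Finset.sum_mul]; exact Finset.sum_congr rfl fun k _ => by ring
      rw [h5, hgi i, zero_mul]
    have e3 : ∑ k : Fin (2^n), g k * (∑ j ∈ Finset.range (2^n),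
        -(z^j * (PolJ (2^n) j).coeff (2^n - 1 - (k:ℕ))))
        = - ∑ j ∈ Finset.range (2^n), cc j * z^j := by
      calc ∑ k : Fin (2^n), g k * (∑ j ∈ Finset.range (2^n),
            -(z^j * (PolJ (2^n) j).coeff (2^n - 1 - (k:ℕ))))
          = ∑ k : Fin (2^n), ∑ j ∈ Finset.range (2^n),
            g k * -(z^j * (PolJ (2^n) j).coeff (2^n - 1 - (k:ℕ))) :=
            Finset.sum_congr rfl fun k _ => by rw [Finset.mul_sum]
        _ = ∑ j ∈ Finset.range (2^n), ∑ k : Fin (2^n),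
            g k * -(z^j * (PolJ (2^n) j).coeff (2^n - 1 - (k:ℕ))) := Finset.sum_comm
        _ = ∑ j ∈ Finset.range (2^n), -(cc j * z^j) := by
            refine Finset.sum_congr rfl fun j _ => ?_
            simp only [hcc]
            rw [Finset.sum_mul, ← Finset.sum_neg_distrib]
            refine Finset.sum_congr rfl fun k _ => by ring
        _ = - ∑ j ∈ Finset.range (2^n), cc j * z^j := by rw [Finset.sum_neg_distrib]
    have e4 : - ∑ j ∈ Finset.range (2^n), cc j * z^j = 0 := by
      rw [← e3]
      rw [Finset.sum_congr rfl (fun (k : Fin (2^n)) _ => by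
        rw [key z k] :
        ∀ k ∈ Finset.univ, g k * (∑ j ∈ Finset.range (2^n),
            -(z^j * (PolJ (2^n) j).coeff (2^n - 1 - (k:ℕ))))
          = g k * (∑ i, M k i * (θpoly i z).coeff 1))]
      exact e2
    exact neg_eq_zero.mp e4
  -- hence all cc j vanish
  have hccz : ∀ j ∈ Finset.range (2^n), cc j = 0 := by
    intro j hj
    have hQ : (∑ j ∈ Finset.range (2^n), Polynomial.C (cc j) * Polynomial.X^j : Polynomial ℂ)
        = 0 := by
      apply Polynomial.funext
      intro z
      rw [Polynomial.eval_finset_sum]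
      simp only [Polynomial.eval_mul, Polynomial.eval_C, Polynomial.eval_pow, Polynomial.eval_X,
        Polynomial.eval_zero]
      exact hzero z
    have := congrArg (fun q => Polynomial.coeff q j) hQ
    simp only [Polynomial.finset_sum_coeff, Polynomial.coeff_C_mul, Polynomial.coeff_X_pow,
      Polynomial.coeff_zero] at this
    rw [Finset.sum_eq_single j] at this
    · simpa using this
    · intro b _ hb; simp [Ne.symm hb]
    · intro hcj; exact absurd hj hcj
  -- contradiction via linear independence of the PolJ coefficient vectors
  have hμ : (fun d : Fin (2^n) => g (Fin.rev d)) = 0 := by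
    apply lagrange_indep (2^n)
    intro j hj
    have := hccz j hj
    rw [hcc] at this
    rw [← this]
    refine Fintype.sum_equiv Fin.revPerm _ _ (fun x => ?_)
    simp only [Fin.revPerm_apply]
    congr 2
    rw [Fin.val_rev]
    have := x.isLt
    omega
  have : g k0 = 0 := by
    have := congrFun hμ (Fin.rev k0)
    simpa using this
  exact hgk0 this
end

section
/- Let L ≥ 1, t ≥ 1 and Δ2 ≥ 1 be integers, let D ⊆ ℂ^L, and suppose given for each point a ∈ ℂ^t a polynomial Ω_a ∈ ℂ[Z_1,…,Z_L] of total degree at most Δ2. Let O be the family of functions ℂ^t → ℂ of the form f_c, c ∈ D, where f_c(a) := Ω_a(c). Let A ⊆ ℂ^t be a finite set that is shattered by O, i.e., such that for every subset A' ⊆ A there exists F ∈ O with A' = {a ∈ A : F(a) = 0}. Then 2^{#A} ≤ (1 + #A·Δ2)^L. -/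
open MvPolynomial

/-- VC-dimension bound for a holomorphically encoded object class: if
`O = {a ↦ Ω_a(c) : c ∈ D}` with each `Ω_a` of total degree at most `Δ2` in the
`L` code variables, and a finite set `A ⊆ ℂ^t` is shattered by `O` (every
subset of `A` is cut out as a zero set of some member of `O`), then
`2^{#A} ≤ (1 + #A·Δ2)^L`. -/
theorem vc_shattering_bound (L t Δ2 : ℕ) (hL : 1 ≤ L) (ht : 1 ≤ t) (hΔ2 : 1 ≤ Δ2)
    (D : Set (Fin L → ℂ)) (Ω : (Fin t → ℂ) → MvPolynomial (Fin L) ℂ)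
    (hdeg : ∀ a : Fin t → ℂ, (Ω a).totalDegree ≤ Δ2)
    (A : Finset (Fin t → ℂ))
    (hshatter : ∀ A' ⊆ A,
      ∃ F ∈ {f : (Fin t → ℂ) → ℂ | ∃ c ∈ D, f = fun a => MvPolynomial.eval c (Ω a)},
        ∀ a ∈ A, (a ∈ A' ↔ F a = 0)) :
    2 ^ A.card ≤ (1 + A.card * Δ2) ^ L := by
  classical
  set N : ℕ := A.card * Δ2 with hN
  -- choose witnesses
  have hchoice : ∀ S : {x // x ∈ A.powerset}, ∃ cc : Fin L → ℂ,
      ∀ a ∈ A, (a ∈ (S : Finset (Fin t → ℂ)) ↔ eval cc (Ω a) = 0) := by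
    intro S
    obtain ⟨F, hF, hprop⟩ := hshatter S.1 (Finset.mem_powerset.mp S.2)
    obtain ⟨cc, hcD, rfl⟩ := hF
    exact ⟨cc, hprop⟩
  choose c hc using hchoice
  -- the products
  set g : {x // x ∈ A.powerset} → MvPolynomial (Fin L) ℂ := fun S => ∏ a ∈ A \ S.1, Ω a with hg
  -- diagonal nonvanishing
  have hdiag : ∀ S : {x // x ∈ A.powerset}, eval (c S) (g S) ≠ 0 := by
    intro S
    rw [hg, map_prod]
    apply Finset.prod_ne_zero_iff.mpr
    intro a ha
    obtain ⟨haA, haS⟩ := Finset.mem_sdiff.mp ha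
    intro h0
    exact haS ((hc S a haA).mpr h0)
  -- off-triangular vanishing
  have hoff : ∀ S T : {x // x ∈ A.powerset}, ¬ (S.1 ⊆ T.1) → eval (c S) (g T) = 0 := by
    intro S T hST
    obtain ⟨a, haS, haT⟩ := Finset.not_subset.mp hST
    have haA : a ∈ A := Finset.mem_powerset.mp S.2 haS
    rw [hg, map_prod]
    apply Finset.prod_eq_zero (Finset.mem_sdiff.mpr ⟨haA, haT⟩)
    exact (hc S a haA).mp haS
  -- linear independence of the g's
  have hli : LinearIndependent ℂ g := by
    rw [linearIndependent_iff']
    intro s f hsum S hS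
    by_contra hfS
    have hne : (s.filter (fun T => f T ≠ 0)).Nonempty := ⟨S, Finset.mem_filter.mpr ⟨hS, hfS⟩⟩
    obtain ⟨m, hm, hmax⟩ := Finset.exists_max_image _ (fun T : {x // x ∈ A.powerset} => T.1.card) hne
    obtain ⟨hms, hfm⟩ := Finset.mem_filter.mp hm
    have := congrArg (eval (c m)) hsum
    rw [map_sum, map_zero] at this
    have heval : ∀ T ∈ s, T ≠ m → eval (c m) (f T • g T) = 0 := by
      intro T hT hTm
      rw [smul_eval]
      by_cases hfT : f T = 0
      · rw [hfT, zero_mul]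
      · by_cases hsub : m.1 ⊆ T.1
        · exfalso
          have hTf : T ∈ s.filter (fun T => f T ≠ 0) := Finset.mem_filter.mpr ⟨hT, hfT⟩
          have hcard : T.1.card ≤ m.1.card := hmax T hTf
          exact hTm (Subtype.ext (Finset.eq_of_subset_of_card_le hsub hcard).symm)
        · rw [hoff m T hsub, mul_zero]
    rw [Finset.sum_eq_single_of_mem m hms heval, smul_eval] at this
    exact hdiag m (by
      rcases mul_eq_zero.mp this with h | h
      · exact absurd h hfm
      · exact h)
  -- the spanning finset of monomials
  set φ : (Fin L → Fin (N + 1)) → MvPolynomial (Fin L) ℂ :=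
    fun d => monomial (Finsupp.equivFunOnFinite.symm (fun i => (d i : ℕ))) 1 with hφ
  set w : Finset (MvPolynomial (Fin L) ℂ) := Finset.univ.image φ with hw
  -- each g S lies in the span of w
  have hspan : ∀ S : {x // x ∈ A.powerset}, g S ∈ Submodule.span ℂ (w : Set (MvPolynomial (Fin L) ℂ)) := by
    intro S
    have hdegS : (g S).totalDegree ≤ N := by
      calc (g S).totalDegree ≤ ∑ a ∈ A \ S.1, (Ω a).totalDegree :=
            totalDegree_finset_prod _ _
        _ ≤ ∑ _a ∈ A \ S.1, Δ2 := Finset.sum_le_sum (fun a _ => hdeg a)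
        _ = (A \ S.1).card * Δ2 := by rw [Finset.sum_const, smul_eq_mul]
        _ ≤ A.card * Δ2 := by
            exact Nat.mul_le_mul_right _ (Finset.card_le_card (Finset.sdiff_subset))
    rw [(g S).as_sum]
    apply Submodule.sum_mem
    intro v hv
    have hvsum : v.sum (fun _ e => e) ≤ N := le_trans (le_totalDegree hv) hdegS
    have hvi : ∀ i, v i < N + 1 := by
      intro i
      apply Nat.lt_succ_of_le
      refine le_trans ?_ hvsum
      by_cases hiv : i ∈ v.support
      · exact Finset.single_le_sum (f := fun j => v j) (fun _ _ => Nat.zero_le _) hiv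
      · simp [Finsupp.notMem_support_iff.mp hiv]
    have : monomial v ((g S).coeff v) = (g S).coeff v • φ (fun i => ⟨v i, hvi i⟩) := by
      rw [hφ]
      simp only [smul_monomial, smul_eq_mul, mul_one]
      congr 1
      have : (fun i => ((⟨v i, hvi i⟩ : Fin (N + 1)) : ℕ)) = ⇑v := rfl
      rw [this, Finsupp.equivFunOnFinite_symm_coe]
    rw [this]
    exact Submodule.smul_mem _ _ (Submodule.subset_span
      (Finset.mem_coe.mpr (Finset.mem_image.mpr ⟨_, Finset.mem_univ _, rfl⟩)))
  -- cardinality bound via linear independence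
  have hcard : (Cardinal.mk {x // x ∈ A.powerset}) ≤
      Fintype.card (w : Set (MvPolynomial (Fin L) ℂ)) := by
    apply linearIndependent_le_span' g hli
    rintro _ ⟨S, rfl⟩
    exact hspan S
  rw [Cardinal.mk_fintype] at hcard
  have hcard' : Fintype.card {x // x ∈ A.powerset} ≤
      Fintype.card (w : Set (MvPolynomial (Fin L) ℂ)) := by
    exact_mod_cast hcard
  have h1 : Fintype.card {x // x ∈ A.powerset} = 2 ^ A.card := by
    rw [Fintype.card_coe, Finset.card_powerset]
  have h2 : Fintype.card (w : Set (MvPolynomial (Fin L) ℂ)) ≤ (1 + A.card * Δ2) ^ L := by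
    simp only [Finset.coe_sort_coe, Fintype.card_coe]
    calc w.card ≤ (Finset.univ : Finset (Fin L → Fin (N + 1))).card :=
          Finset.card_image_le
      _ = (N + 1) ^ L := by simp [Finset.card_univ]
      _ = (1 + A.card * Δ2) ^ L := by rw [hN, Nat.add_comm]
  rw [h1] at hcard'
  exact le_trans hcard' h2
end
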